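/- arXiv:2502.19851 — 6 statements merged into one kernel-verified Lean document; each statement's English description precedes it below -/
import Mathlib

section
/- For any measurable forecast f: 𝒳 → [0,1] and any joint distribution of (X,Y) with Y ∈ [0,1], the Distance from Calibration satisfies Δ_dCE(f) ≤ 3·√(Δ_Cutoff(f)); equivalently, Δ_dCE(f)²/9 ≤ Δ_Cutoff(f). -/
/-!
Cut `[0, 1]` into `n + 1` bins of width `1 / (n + 1)` and let `g` predict, on each bin of `f`, the
average of `Y` over that bin. Then `g` is perfectly calibrated, and on a bin `g - f` varies by at
most the bin width, so `E[|g - f|; bin]` exceeds `|E[(Y - f); bin]| ≤ Δ_Cutoff` by at most the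
width times the mass of the bin. Summing, `Δ_dCE ≤ (n + 1) Δ_Cutoff + 1 / (n + 1)`, and
`n + 1 ≈ Δ_Cutoff ^ (-1/2)` gives `Δ_dCE ≤ 3 √Δ_Cutoff`.
-/

open MeasureTheory Set

/-- Cutoff Calibration Error: supremum over intervals `I ⊆ [0,1]` of
`|E[(Y − f(X))·1{f(X) ∈ I}]|`. -/
noncomputable def cutoffCE {Ω 𝒳 : Type*} [MeasurableSpace Ω] [MeasurableSpace 𝒳]
    (μ : Measure Ω) (X : Ω → 𝒳) (Y : Ω → ℝ) (f : 𝒳 → ℝ) : ℝ :=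
  ⨆ I : {I : Set ℝ // I ⊆ Icc 0 1 ∧ I.OrdConnected},
    |∫ ω, (Y ω - f (X ω)) * I.1.indicator (1 : ℝ → ℝ) (f (X ω)) ∂μ|

/-- Distance from Calibration: infimum of `E[|g(X) − f(X)|]` over measurable
`g : 𝒳 → [0,1]` that are perfectly calibrated, i.e. `E[Y | g(X)] = g(X)` a.s. -/
noncomputable def dCE {Ω 𝒳 : Type*} [MeasurableSpace Ω] [MeasurableSpace 𝒳]
    (μ : Measure Ω) (X : Ω → 𝒳) (Y : Ω → ℝ) (f : 𝒳 → ℝ) : ℝ :=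
  sInf {r : ℝ | ∃ g : 𝒳 → ℝ, Measurable g ∧ (∀ x, g x ∈ Icc (0:ℝ) 1) ∧
    (μ[Y | MeasurableSpace.comap (fun ω => g (X ω)) inferInstance]
      =ᵐ[μ] fun ω => g (X ω)) ∧
    r = ∫ ω, |g (X ω) - f (X ω)| ∂μ}

section FiberAverage

variable {Ω ι E : Type*} [MeasurableSpace Ω] {μ : Measure Ω} {κ : Ω → ι} {Y : Ω → ℝ}

theorem Convex.setAverage_mem_of_zero_mem [NormedAddCommGroup E] [NormedSpace ℝ E]
    [CompleteSpace E] [IsFiniteMeasure μ] {S : Set E} (hS : Convex ℝ S) (hSc : IsClosed S)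
    (h0 : 0 ∈ S) {F : Ω → E} (hF : ∀ ω, F ω ∈ S) (hFi : Integrable F μ) (s : Set Ω) :
    ⨍ ω in s, F ω ∂μ ∈ S := by
  rcases eq_or_ne (μ s) 0 with hs | hs
  · rwa [Measure.restrict_eq_zero.2 hs, average_zero_measure]
  · exact hS.set_average_mem hSc hs (measure_ne_top μ s) (ae_of_all _ hF) hFi.integrableOn

noncomputable def fiberAverage (μ : Measure Ω) (κ : Ω → ι) (Y : Ω → ℝ) (ω : Ω) : ℝ :=
  ⨍ x in κ ⁻¹' {κ ω}, Y x ∂μ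

theorem fiberAverage_eq_of_mem {i : ι} {ω : Ω} (hω : ω ∈ κ ⁻¹' {i}) :
    fiberAverage μ κ Y ω = ⨍ x in κ ⁻¹' {i}, Y x ∂μ := by
  rw [mem_preimage, mem_singleton_iff] at hω
  rw [fiberAverage, hω]

variable [MeasurableSpace ι] [MeasurableSingletonClass ι]

theorem setIntegral_preimage_eq_sum_fiber [NormedAddCommGroup E] [NormedSpace ℝ E]
    (hκ : Measurable κ) {F : Ω → E} (hF : Integrable F μ) (T : Finset ι) :
    ∫ ω in κ ⁻¹' T, F ω ∂μ = ∑ i ∈ T, ∫ ω in κ ⁻¹' {i}, F ω ∂μ := by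
  rw [← biUnion_preimage_singleton]
  exact integral_biUnion_finset T (fun i _ => hκ (measurableSet_singleton i))
    (fun i _ j _ hij => (disjoint_singleton.2 hij).preimage κ) fun i _ => hF.integrableOn

theorem integral_eq_sum_fiber [NormedAddCommGroup E] [NormedSpace ℝ E] [Fintype ι]
    (hκ : Measurable κ) {F : Ω → E} (hF : Integrable F μ) :
    ∫ ω, F ω ∂μ = ∑ i, ∫ ω in κ ⁻¹' {i}, F ω ∂μ := by
  rw [← setIntegral_preimage_eq_sum_fiber hκ hF, Finset.coe_univ, preimage_univ,
    setIntegral_univ]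

theorem measurable_fiberAverage [Countable ι] (hκ : Measurable κ) :
    Measurable (fiberAverage μ κ Y) :=
  (Measurable.of_discrete (f := fun i => ⨍ x in κ ⁻¹' {i}, Y x ∂μ)).comp hκ

theorem integrable_fiberAverage [Fintype ι] [IsFiniteMeasure μ] (hκ : Measurable κ) :
    Integrable (fiberAverage μ κ Y) μ :=
  .of_bound (measurable_fiberAverage hκ).aestronglyMeasurable (∑ i, ‖⨍ x in κ ⁻¹' {i}, Y x ∂μ‖)
    (ae_of_all _ fun ω => Finset.single_le_sum (f := fun i => ‖⨍ x in κ ⁻¹' {i}, Y x ∂μ‖)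
      (fun _ _ => norm_nonneg _) (Finset.mem_univ (κ ω)))

theorem setIntegral_fiber_fiberAverage [IsFiniteMeasure μ] (hκ : Measurable κ) (i : ι) :
    ∫ ω in κ ⁻¹' {i}, fiberAverage μ κ Y ω ∂μ = ∫ ω in κ ⁻¹' {i}, Y ω ∂μ := by
  rw [setIntegral_congr_fun (hκ (measurableSet_singleton i)) fun ω => fiberAverage_eq_of_mem]
  exact setIntegral_setAverage μ Y _

theorem condExp_comap_fiberAverage [Fintype ι] [IsFiniteMeasure μ] (hκ : Measurable κ)
    (hY : Integrable Y μ) :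
    μ[Y | MeasurableSpace.comap (fiberAverage μ κ Y) inferInstance] =ᵐ[μ] fiberAverage μ κ Y := by
  classical
  refine (ae_eq_condExp_of_forall_setIntegral_eq (measurable_fiberAverage hκ).comap_le hY
    (fun _ _ _ => (integrable_fiberAverage hκ).integrableOn) ?_
    (Measurable.of_comap_le le_rfl).aestronglyMeasurable).symm
  rintro _ ⟨t, -, rfl⟩ -
  have hpre : fiberAverage μ κ Y ⁻¹' t =
      κ ⁻¹' ↑(Finset.univ.filter fun i => ⨍ x in κ ⁻¹' {i}, Y x ∂μ ∈ t) := by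
    ext ω
    simp [fiberAverage]
  rw [hpre, setIntegral_preimage_eq_sum_fiber hκ (integrable_fiberAverage hκ),
    setIntegral_preimage_eq_sum_fiber hκ hY]
  exact Finset.sum_congr rfl fun i _ => setIntegral_fiber_fiberAverage hκ i

end FiberAverage

theorem setIntegral_abs_le_abs_setIntegral_add {Ω : Type*} [MeasurableSpace Ω] {μ : Measure Ω}
    [IsFiniteMeasure μ] {s : Set Ω} (hs : MeasurableSet s) {h : Ω → ℝ} {w : ℝ}
    (hw : ∀ x ∈ s, ∀ y ∈ s, |h x - h y| ≤ w) :
    ∫ x in s, |h x| ∂μ ≤ |∫ x in s, h x ∂μ| + w * μ.real s := by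
  have hw0 : 0 ≤ w * μ.real s := by
    rcases s.eq_empty_or_nonempty with rfl | ⟨x, hx⟩
    · simp
    · exact mul_nonneg ((abs_nonneg _).trans (hw x hx x hx)) measureReal_nonneg
  by_cases hpos : ∀ x ∈ s, 0 ≤ h x
  · rw [setIntegral_congr_fun hs fun x hx => abs_of_nonneg (hpos x hx)]
    linarith [le_abs_self (∫ x in s, h x ∂μ)]
  by_cases hneg : ∀ x ∈ s, h x ≤ 0
  · rw [setIntegral_congr_fun hs fun x hx => abs_of_nonpos (hneg x hx), integral_neg]
    linarith [neg_le_abs (∫ x in s, h x ∂μ)]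
  push Not at hpos hneg
  obtain ⟨a, ha, ha0⟩ := hpos
  obtain ⟨b, hb, hb0⟩ := hneg
  -- `h` changes sign on `s`, so it stays within `w` of zero there
  have hsmall : ∀ x ∈ s, ‖|h x|‖ ≤ w := fun x hx => by
    have h1 := abs_le.1 (hw x hx a ha)
    have h2 := abs_le.1 (hw b hb x hx)
    rw [norm_abs_eq_norm, Real.norm_eq_abs, abs_le]
    constructor <;> linarith
  calc ∫ x in s, |h x| ∂μ ≤ w * μ.real s :=
        (le_abs_self _).trans (norm_setIntegral_le_of_norm_le_const (measure_lt_top μ s) hsmall)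
    _ ≤ |∫ x in s, h x ∂μ| + w * μ.real s := le_add_of_nonneg_left (abs_nonneg _)

section Calibration

variable {Ω 𝒳 : Type*} [MeasurableSpace Ω] {μ : Measure Ω} {X : Ω → 𝒳} {Y : Ω → ℝ} {f : 𝒳 → ℝ}

theorem abs_integral_mul_indicator_le [IsFiniteMeasure μ] (hY01 : ∀ ω, Y ω ∈ Icc (0:ℝ) 1)
    (hf01 : ∀ x, f x ∈ Icc (0:ℝ) 1) (I : Set ℝ) :
    |∫ ω, (Y ω - f (X ω)) * I.indicator (1 : ℝ → ℝ) (f (X ω)) ∂μ| ≤ μ.real univ := by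
  have hpt : ∀ ω, ‖(Y ω - f (X ω)) * I.indicator (1 : ℝ → ℝ) (f (X ω))‖ ≤ 1 := fun ω => by
    have hYf : |Y ω - f (X ω)| ≤ 1 := by
      obtain ⟨hY0, hY1⟩ := hY01 ω
      obtain ⟨hf0, hf1⟩ := hf01 (X ω)
      rw [abs_le]
      constructor <;> linarith
    have hI : ‖I.indicator (1 : ℝ → ℝ) (f (X ω))‖ ≤ 1 := by
      by_cases h : f (X ω) ∈ I <;> simp [h]
    rw [norm_mul]
    exact mul_le_one₀ hYf (norm_nonneg _) hI
  simpa using norm_integral_le_of_norm_le_const (μ := μ) (ae_of_all _ hpt)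

variable [MeasurableSpace 𝒳]

theorem cutoffCE_nonneg : 0 ≤ cutoffCE μ X Y f :=
  Real.iSup_nonneg fun _ => abs_nonneg _

theorem cutoffCE_le_one [IsProbabilityMeasure μ] (hY01 : ∀ ω, Y ω ∈ Icc (0:ℝ) 1)
    (hf01 : ∀ x, f x ∈ Icc (0:ℝ) 1) : cutoffCE μ X Y f ≤ 1 :=
  Real.iSup_le (fun I => (abs_integral_mul_indicator_le hY01 hf01 I.1).trans_eq (by simp))
    zero_le_one

theorem abs_setIntegral_preimage_le_cutoffCE [IsFiniteMeasure μ] (hX : Measurable X)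
    (hf : Measurable f) (hY01 : ∀ ω, Y ω ∈ Icc (0:ℝ) 1) (hf01 : ∀ x, f x ∈ Icc (0:ℝ) 1)
    {J : Set ℝ} (hJ : J.OrdConnected) :
    |∫ ω in (fun ω => f (X ω)) ⁻¹' J, (Y ω - f (X ω)) ∂μ| ≤ cutoffCE μ X Y f := by
  have hcut : ∫ ω in (fun ω => f (X ω)) ⁻¹' J, (Y ω - f (X ω)) ∂μ =
      ∫ ω, (Y ω - f (X ω)) * (J ∩ Icc 0 1).indicator (1 : ℝ → ℝ) (f (X ω)) ∂μ := by
    rw [← integral_indicator ((hf.fun_comp hX) hJ.measurableSet)]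
    congr 1
    ext ω
    by_cases hω : f (X ω) ∈ J <;> simp [hω, hf01 (X ω)]
  rw [hcut]
  exact le_ciSup (f := fun I : {I : Set ℝ // I ⊆ Icc 0 1 ∧ I.OrdConnected} =>
      |∫ ω, (Y ω - f (X ω)) * I.1.indicator (1 : ℝ → ℝ) (f (X ω)) ∂μ|)
    ⟨μ.real univ, forall_mem_range.2 fun I => abs_integral_mul_indicator_le hY01 hf01 I.1⟩
    ⟨J ∩ Icc 0 1, inter_subset_right, hJ.inter ordConnected_Icc⟩

theorem dCE_nonneg : 0 ≤ dCE μ X Y f :=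
  Real.sInf_nonneg <| by
    rintro _ ⟨g, -, -, -, rfl⟩
    exact integral_nonneg fun _ => abs_nonneg _

theorem dCE_le_integral {g : 𝒳 → ℝ} (hg : Measurable g) (hg01 : ∀ x, g x ∈ Icc (0:ℝ) 1)
    (hcal : μ[Y | MeasurableSpace.comap (fun ω => g (X ω)) inferInstance]
      =ᵐ[μ] fun ω => g (X ω)) :
    dCE μ X Y f ≤ ∫ ω, |g (X ω) - f (X ω)| ∂μ :=
  csInf_le ⟨0, by rintro _ ⟨g, -, -, -, rfl⟩; exact integral_nonneg fun _ => abs_nonneg _⟩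
    ⟨g, hg, hg01, hcal, rfl⟩

theorem dCE_le_card_mul_cutoffCE_add [IsProbabilityMeasure μ] (hX : Measurable X)
    (hY : Measurable Y) (hf : Measurable f) (hY01 : ∀ ω, Y ω ∈ Icc (0:ℝ) 1)
    (hf01 : ∀ x, f x ∈ Icc (0:ℝ) 1) {ι : Type*} [Fintype ι] [MeasurableSpace ι]
    [MeasurableSingletonClass ι] {κ : ℝ → ι} (hκ : ∀ i, (κ ⁻¹' {i}).OrdConnected) {w : ℝ}
    (hw : ∀ s ∈ Icc (0:ℝ) 1, ∀ t ∈ Icc (0:ℝ) 1, κ s = κ t → |s - t| ≤ w) :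
    dCE μ X Y f ≤ Fintype.card ι * cutoffCE μ X Y f + w := by
  have hκm : Measurable κ := measurable_to_countable' fun i => (hκ i).measurableSet
  set bin : Ω → ι := fun ω => κ (f (X ω))
  have hbin : Measurable bin := hκm.comp (hf.comp hX)
  set g : 𝒳 → ℝ := fun x => ⨍ ω in bin ⁻¹' {κ (f x)}, Y ω ∂μ
  have hgX : (fun ω => g (X ω)) = fiberAverage μ bin Y := rfl
  have hg : Measurable g :=
    (Measurable.of_discrete (f := fun i => ⨍ ω in bin ⁻¹' {i}, Y ω ∂μ)).comp (hκm.comp hf)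
  have hYi : Integrable Y μ := .of_mem_Icc 0 1 hY.aemeasurable (ae_of_all _ hY01)
  have hfXi : Integrable (fun ω => f (X ω)) μ :=
    .of_mem_Icc 0 1 (hf.comp hX).aemeasurable (ae_of_all _ fun ω => hf01 (X ω))
  have hg01 : ∀ x, g x ∈ Icc (0:ℝ) 1 := fun x =>
    (convex_Icc 0 1).setAverage_mem_of_zero_mem isClosed_Icc (left_mem_Icc.2 zero_le_one)
      hY01 hYi _
  have hgXi : Integrable (fun ω => g (X ω)) μ := hgX ▸ integrable_fiberAverage hbin
  have hbin_le : ∀ i, ∫ ω in bin ⁻¹' {i}, |g (X ω) - f (X ω)| ∂μ ≤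
      cutoffCE μ X Y f + w * μ.real (bin ⁻¹' {i}) := fun i => by
    have hwidth : ∀ ω ∈ bin ⁻¹' {i}, ∀ ω' ∈ bin ⁻¹' {i},
        |(g (X ω) - f (X ω)) - (g (X ω') - f (X ω'))| ≤ w := fun ω hω ω' hω' => by
      rw [show g (X ω) = g (X ω') from (fiberAverage_eq_of_mem hω).trans
        (fiberAverage_eq_of_mem hω').symm, sub_sub_sub_cancel_left]
      exact hw _ (hf01 _) _ (hf01 _) (hω'.trans hω.symm)
    calc ∫ ω in bin ⁻¹' {i}, |g (X ω) - f (X ω)| ∂μ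
        ≤ |∫ ω in bin ⁻¹' {i}, (g (X ω) - f (X ω)) ∂μ| + w * μ.real (bin ⁻¹' {i}) :=
          setIntegral_abs_le_abs_setIntegral_add (hbin (measurableSet_singleton i)) hwidth
      _ = |∫ ω in bin ⁻¹' {i}, (Y ω - f (X ω)) ∂μ| + w * μ.real (bin ⁻¹' {i}) := by
          rw [integral_sub hgXi.integrableOn hfXi.integrableOn,
            integral_sub hYi.integrableOn hfXi.integrableOn, hgX,
            setIntegral_fiber_fiberAverage hbin]
      _ ≤ cutoffCE μ X Y f + w * μ.real (bin ⁻¹' {i}) := by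
          gcongr
          exact abs_setIntegral_preimage_le_cutoffCE hX hf hY01 hf01 (hκ i)
  calc dCE μ X Y f ≤ ∫ ω, |g (X ω) - f (X ω)| ∂μ :=
        dCE_le_integral hg hg01 (hgX ▸ condExp_comap_fiberAverage hbin hYi)
    _ = ∑ i, ∫ ω in bin ⁻¹' {i}, |g (X ω) - f (X ω)| ∂μ :=
        integral_eq_sum_fiber hbin (hgXi.sub hfXi).abs
    _ ≤ ∑ i, (cutoffCE μ X Y f + w * μ.real (bin ⁻¹' {i})) := Finset.sum_le_sum fun i _ => hbin_le i
    _ = Fintype.card ι * cutoffCE μ X Y f + w := by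
        rw [Finset.sum_add_distrib, ← Finset.mul_sum,
          sum_measureReal_preimage_singleton _ fun i _ => hbin (measurableSet_singleton i)]
        simp

end Calibration

/-- The bins are `[i / (n + 1), (i + 1) / (n + 1))`, except that every `t ≥ 1` goes to the last. -/
noncomputable def unitIntervalBin (n : ℕ) (t : ℝ) : Fin (n + 1) :=
  ⟨min ⌊(n + 1) * t⌋₊ n, Nat.lt_succ_of_le (min_le_right _ _)⟩

theorem unitIntervalBin_mono (n : ℕ) : Monotone (unitIntervalBin n) := fun _ _ hst =>
  Fin.mk_le_mk.2 (min_le_min_right _ (Nat.floor_mono (by gcongr)))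

theorem ordConnected_unitIntervalBin_preimage (n : ℕ) (i : Fin (n + 1)) :
    (unitIntervalBin n ⁻¹' {i}).OrdConnected :=
  ordConnected_singleton.preimage_mono (unitIntervalBin_mono n)

theorem unitIntervalBin_le_mul_le {n : ℕ} {t : ℝ} (ht : t ∈ Icc (0:ℝ) 1) :
    ((unitIntervalBin n t : ℕ) : ℝ) ≤ (n + 1) * t ∧
      (n + 1) * t ≤ (unitIntervalBin n t : ℕ) + 1 := by
  have hnt : 0 ≤ ((n:ℝ) + 1) * t := by have := ht.1; positivity
  simp only [unitIntervalBin, Nat.cast_min]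
  refine ⟨(min_le_left _ _).trans (Nat.floor_le hnt), ?_⟩
  rw [← min_add_add_right]
  exact le_min (Nat.lt_floor_add_one _).le (by nlinarith [ht.2])

theorem abs_sub_le_of_unitIntervalBin_eq {n : ℕ} {s t : ℝ} (hs : s ∈ Icc (0:ℝ) 1)
    (ht : t ∈ Icc (0:ℝ) 1) (hst : unitIntervalBin n s = unitIntervalBin n t) :
    |s - t| ≤ 1 / (n + 1) := by
  have hs' := unitIntervalBin_le_mul_le (n := n) hs
  have ht' := unitIntervalBin_le_mul_le (n := n) ht
  rw [hst] at hs'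
  rw [abs_sub_le_iff, le_div_iff₀ (by positivity), le_div_iff₀ (by positivity)]
  constructor <;> nlinarith

theorem dCE_le_succ_mul_cutoffCE_add_inv {Ω 𝒳 : Type*} [MeasurableSpace Ω] [MeasurableSpace 𝒳]
    {μ : Measure Ω} [IsProbabilityMeasure μ] {X : Ω → 𝒳} {Y : Ω → ℝ} {f : 𝒳 → ℝ}
    (hX : Measurable X) (hY : Measurable Y) (hf : Measurable f)
    (hY01 : ∀ ω, Y ω ∈ Icc (0:ℝ) 1) (hf01 : ∀ x, f x ∈ Icc (0:ℝ) 1) (n : ℕ) :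
    dCE μ X Y f ≤ (n + 1) * cutoffCE μ X Y f + 1 / (n + 1) := by
  simpa using dCE_le_card_mul_cutoffCE_add hX hY hf hY01 hf01
    (ordConnected_unitIntervalBin_preimage n)
    fun _ hs _ ht => abs_sub_le_of_unitIntervalBin_eq hs ht

theorem sq_div_nine_le_of_forall_le_succ_mul_add_inv {d Δ : ℝ} (hd : 0 ≤ d) (hΔ0 : 0 ≤ Δ)
    (hΔ1 : Δ ≤ 1) (h : ∀ n : ℕ, d ≤ (n + 1) * Δ + 1 / (n + 1)) : d ^ 2 / 9 ≤ Δ := by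
  by_contra! hlt
  set s := d / 3 with hsd
  have hΔs2 : Δ < s * s := by linarith [show s * s = d ^ 2 / 9 by ring]
  have hs : 0 < s := by nlinarith [show 0 ≤ s by positivity]
  have hΔs : Δ ≤ s := by nlinarith
  -- `n + 1 ≈ 1 / s` balances the two terms
  set n := ⌊1 / s⌋₊
  have hn : (n : ℝ) ≤ 1 / s := Nat.floor_le (by positivity)
  have hinv : 1 / ((n : ℝ) + 1) < s := by
    rw [div_lt_iff₀ (by positivity), ← div_lt_iff₀' hs]
    exact Nat.lt_floor_add_one _
  have hmul : ((n : ℝ) + 1) * Δ < 2 * s :=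
    calc ((n : ℝ) + 1) * Δ ≤ (1 / s + 1) * Δ := by gcongr
      _ = Δ / s + Δ := by ring
      _ < s + s := add_lt_add_of_lt_of_le ((div_lt_iff₀ hs).2 hΔs2) hΔs
      _ = 2 * s := by ring
  linarith [h n, hsd]

/-- For any measurable forecast `f : 𝒳 → [0,1]` and joint distribution of `(X,Y)` with
`Y ∈ [0,1]`, `Δ_dCE(f)²/9 ≤ Δ_Cutoff(f)` (equivalently `Δ_dCE(f) ≤ 3·√(Δ_Cutoff(f))`). -/
theorem dce_sq_div_nine_le_cutoff {Ω 𝒳 : Type*} [MeasurableSpace Ω] [MeasurableSpace 𝒳]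
    (μ : Measure Ω) [IsProbabilityMeasure μ]
    (X : Ω → 𝒳) (Y : Ω → ℝ) (f : 𝒳 → ℝ)
    (hX : Measurable X) (hY : Measurable Y) (hf : Measurable f)
    (hY01 : ∀ ω, Y ω ∈ Icc (0:ℝ) 1) (hf01 : ∀ x, f x ∈ Icc (0:ℝ) 1) :
    dCE μ X Y f ^ 2 / 9 ≤ cutoffCE μ X Y f :=
  sq_div_nine_le_of_forall_le_succ_mul_add_inv dCE_nonneg cutoffCE_nonneg
    (cutoffCE_le_one hY01 hf01) (dCE_le_succ_mul_cutoffCE_add_inv hX hY hf hY01 hf01)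
end

section
/- For any measurable forecast f: 𝒳 → [0,1], any τ ∈ [0,1], and any joint distribution of (X,Y) with Y ∈ {0,1}: R_bd(f; τ) − inf over all measurable h: [0,1] → [0,1] of R_bd(h∘f; τ) ≤ Δ_ECE(f). -/
/-!
Write `F = f ∘ X` and `G = E[Y | F]`. Up to a term that does not depend on the decision, the risk
of deciding `1` on a set `A` is `∫_A (τ - Y)`, and for `A` in `σ(F)` this equals `∫_A (τ - G)`.
Every wrapper `h ∘ f` decides on a set in `σ(F)`, and the best such set is `{G ≥ τ}`. The plug-in
rule decides on `{F ≥ τ}` instead, which differs from `{G ≥ τ}` only where `τ` lies between `F`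
and `G`, so the pointwise loss `|τ - G|` incurred there is at most `|G - F|`.
-/

open MeasureTheory Set

/-- Plug-in risk for the binary decision loss
`ℓ_bd(y, ŷ; τ) = τ(1−y)ŷ + (1−τ)y(1−ŷ)` with plug-in decision rule `1{g(X) ≥ τ}`. -/
noncomputable def Rbd {Ω 𝒳 : Type*} [MeasurableSpace Ω] [MeasurableSpace 𝒳]
    (μ : Measure Ω) (X : Ω → 𝒳) (Y : Ω → ℝ) (g : 𝒳 → ℝ) (τ : ℝ) : ℝ :=
  ∫ ω, (τ * (1 - Y ω) * (if τ ≤ g (X ω) then (1:ℝ) else 0)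
      + (1 - τ) * Y ω * (1 - if τ ≤ g (X ω) then (1:ℝ) else 0)) ∂μ

/-- Expected Calibration Error: `E[|E[Y | f(X)] − f(X)|]`. -/
noncomputable def eceCE {Ω 𝒳 : Type*} [MeasurableSpace Ω] [MeasurableSpace 𝒳]
    (μ : Measure Ω) (X : Ω → 𝒳) (Y : Ω → ℝ) (f : 𝒳 → ℝ) : ℝ :=
  ∫ ω, |(μ[Y | MeasurableSpace.comap (fun ω => f (X ω)) inferInstance]) ω - f (X ω)| ∂μ

section Threshold

variable {Ω : Type*}

lemma indicator_preimage_Ici_sub_indicator_le_abs (F G : Ω → ℝ) (τ : ℝ) (B : Set Ω) (ω : Ω) :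
    (F ⁻¹' Ici τ).indicator (fun ω => τ - G ω) ω - B.indicator (fun ω => τ - G ω) ω
      ≤ |G ω - F ω| := by
  by_cases hA : τ ≤ F ω <;> by_cases hB : ω ∈ B <;>
    simp only [indicator, mem_preimage, mem_Ici, hA, hB, if_true, if_false] <;>
    linarith [abs_nonneg (G ω - F ω), le_abs_self (G ω - F ω), neg_abs_le (G ω - F ω)]

variable {m m₀ : MeasurableSpace Ω} {μ : Measure Ω} [IsFiniteMeasure μ]

lemma setIntegral_const_sub_condExp (hm : m ≤ m₀) {Y : Ω → ℝ} (hY : Integrable Y μ) (τ : ℝ)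
    {S : Set Ω} (hS : MeasurableSet[m] S) :
    ∫ ω in S, (τ - μ[Y | m] ω) ∂μ = ∫ ω in S, (τ - Y ω) ∂μ := by
  rw [integral_sub (integrable_const τ).integrableOn integrable_condExp.integrableOn,
    integral_sub (integrable_const τ).integrableOn hY.integrableOn, setIntegral_condExp hm hY hS]

theorem setIntegral_preimage_Ici_sub_setIntegral_le (hm : m ≤ m₀) {F Y : Ω → ℝ}
    (hFm : Measurable[m] F) (hF : Integrable F μ) (hY : Integrable Y μ) (τ : ℝ)
    {B : Set Ω} (hB : MeasurableSet[m] B) :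
    (∫ ω in F ⁻¹' Ici τ, (τ - Y ω) ∂μ) - ∫ ω in B, (τ - Y ω) ∂μ ≤ ∫ ω, |μ[Y | m] ω - F ω| ∂μ := by
  have hA : MeasurableSet[m] (F ⁻¹' Ici τ) := hFm measurableSet_Ici
  have hτG : Integrable (fun ω => τ - μ[Y | m] ω) μ := (integrable_const τ).sub integrable_condExp
  rw [← setIntegral_const_sub_condExp hm hY τ hA, ← setIntegral_const_sub_condExp hm hY τ hB,
    ← integral_indicator (hm _ hA), ← integral_indicator (hm _ hB),
    ← integral_sub (hτG.indicator (hm _ hA)) (hτG.indicator (hm _ hB))]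
  exact integral_mono ((hτG.indicator (hm _ hA)).sub (hτG.indicator (hm _ hB)))
    (integrable_condExp.sub hF).abs
    (indicator_preimage_Ici_sub_indicator_le_abs F (μ[Y | m]) τ B)

end Threshold

section Risk

variable {Ω 𝒳 : Type*} [MeasurableSpace Ω] [MeasurableSpace 𝒳] {μ : Measure Ω}
  [IsFiniteMeasure μ] {X : Ω → 𝒳} {Y : Ω → ℝ}

lemma Rbd_eq_integral_add_setIntegral (hX : Measurable X) (hY : Integrable Y μ) {g : 𝒳 → ℝ}
    (hg : Measurable g) (τ : ℝ) :
    Rbd μ X Y g τ =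
      (∫ ω, (1 - τ) * Y ω ∂μ) + ∫ ω in (fun ω => g (X ω)) ⁻¹' Ici τ, (τ - Y ω) ∂μ := by
  have hS : MeasurableSet ((fun ω => g (X ω)) ⁻¹' Ici τ) := (hg.comp hX) measurableSet_Ici
  have hτY : Integrable (fun ω => τ - Y ω) μ := (integrable_const τ).sub hY
  rw [Rbd, ← integral_indicator hS, ← integral_add (hY.const_mul _) (hτY.indicator hS)]
  refine integral_congr_ae (ae_of_all _ fun ω => ?_)
  by_cases hω : τ ≤ g (X ω) <;>
    simp only [indicator, mem_preimage, mem_Ici, hω, if_true, if_false] <;> ring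

theorem Rbd_sub_Rbd_comp_le_eceCE (hX : Measurable X) (hY : Integrable Y μ) {f : 𝒳 → ℝ}
    (hf : Measurable f) (hfX : Integrable (fun ω => f (X ω)) μ) (τ : ℝ) {h : ℝ → ℝ}
    (hh : Measurable h) :
    Rbd μ X Y f τ - Rbd μ X Y (fun x => h (f x)) τ ≤ eceCE μ X Y f := by
  have hFm : Measurable[MeasurableSpace.comap (fun ω => f (X ω)) inferInstance]
      (fun ω => f (X ω)) := comap_measurable _
  rw [Rbd_eq_integral_add_setIntegral hX hY hf,
    Rbd_eq_integral_add_setIntegral (g := fun x => h (f x)) hX hY (hh.comp hf),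
    add_sub_add_left_eq_sub]
  exact setIntegral_preimage_Ici_sub_setIntegral_le (hf.comp hX).comap_le hFm hfX hY τ
    (hFm (hh measurableSet_Ici))

end Risk

theorem risk_gap_le_ece_general {Ω 𝒳 : Type*} [MeasurableSpace Ω] [MeasurableSpace 𝒳]
    (μ : Measure Ω) [IsProbabilityMeasure μ]
    (X : Ω → 𝒳) (Y : Ω → ℝ) (f : 𝒳 → ℝ)
    (hX : Measurable X) (hY : Measurable Y) (hf : Measurable f)
    (hYbin : ∀ ω, Y ω = 0 ∨ Y ω = 1) (hf01 : ∀ x, f x ∈ Icc (0:ℝ) 1)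
    (τ : ℝ) :
    Rbd μ X Y f τ -
        sInf {r : ℝ | ∃ h : ℝ → ℝ, Measurable h ∧ (∀ t, h t ∈ Icc (0:ℝ) 1) ∧
          r = Rbd μ X Y (fun x => h (f x)) τ}
      ≤ eceCE μ X Y f := by
  have hYint : Integrable Y μ := Integrable.of_bound hY.aestronglyMeasurable 1 <|
    ae_of_all _ fun ω => by rcases hYbin ω with h | h <;> simp [h]
  have hfXint : Integrable (fun ω => f (X ω)) μ :=
    Integrable.of_bound (hf.comp hX).aestronglyMeasurable 1 <| ae_of_all _ fun ω => by
      rw [Real.norm_eq_abs, abs_le]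
      exact ⟨by linarith [(hf01 (X ω)).1], (hf01 (X ω)).2⟩
  have hne : {r : ℝ | ∃ h : ℝ → ℝ, Measurable h ∧ (∀ t, h t ∈ Icc (0:ℝ) 1) ∧
      r = Rbd μ X Y (fun x => h (f x)) τ}.Nonempty :=
    ⟨_, fun _ => 0, measurable_const, fun _ => ⟨le_rfl, zero_le_one⟩, rfl⟩
  rw [sub_le_comm]
  refine le_csInf hne ?_
  rintro r ⟨h, hh, -, rfl⟩
  exact sub_le_comm.mp (Rbd_sub_Rbd_comp_le_eceCE hX hYint hf hfXint τ hh)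

/-- ECE bounds the risk gap over all measurable wrappers `h : [0,1] → [0,1]`:
`R_bd(f; τ) − inf_h R_bd(h∘f; τ) ≤ Δ_ECE(f)`. -/
theorem risk_gap_le_ece {Ω 𝒳 : Type*} [MeasurableSpace Ω] [MeasurableSpace 𝒳]
    (μ : Measure Ω) [IsProbabilityMeasure μ]
    (X : Ω → 𝒳) (Y : Ω → ℝ) (f : 𝒳 → ℝ)
    (hX : Measurable X) (hY : Measurable Y) (hf : Measurable f)
    (hYbin : ∀ ω, Y ω = 0 ∨ Y ω = 1) (hf01 : ∀ x, f x ∈ Icc (0:ℝ) 1)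
    (τ : ℝ) (hτ : τ ∈ Icc (0:ℝ) 1) :
    Rbd μ X Y f τ -
        sInf {r : ℝ | ∃ h : ℝ → ℝ, Measurable h ∧ (∀ t, h t ∈ Icc (0:ℝ) 1) ∧
          r = Rbd μ X Y (fun x => h (f x)) τ}
      ≤ eceCE μ X Y f :=
  risk_gap_le_ece_general μ X Y f hX hY hf hYbin hf01 τ
end

section
/- For any measurable forecast f: 𝒳 → [0,1], any threshold Y* ∈ [0,1], and any joint distribution of (X,Y) with Y ∈ [0,1]: (i) R_st(f; Y*) − inf over all monotone non-decreasing h: [0,1] → [0,1] of R_st(h∘f; Y*) ≤ 2·Δ_Cutoff(f); and (ii) R_st(f; Y*) − inf over all measurable h: [0,1] → [0,1] of R_st(h∘f; Y*) ≤ Δ_ECE(f). -/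
open MeasureTheory Set

/-- Sign-testing risk with threshold `Y*`:
`R_st(g; Y*) = E[(Y − Y*)·1{g(X) ≤ Y*}·1{Y > Y*}] + E[(Y* − Y)·1{g(X) > Y*}·1{Y ≤ Y*}]`. -/
noncomputable def Rst {Ω 𝒳 : Type*} [MeasurableSpace Ω] [MeasurableSpace 𝒳]
    (μ : Measure Ω) (X : Ω → 𝒳) (Y : Ω → ℝ) (g : 𝒳 → ℝ) (ystar : ℝ) : ℝ :=
  (∫ ω, (Y ω - ystar) * (if g (X ω) ≤ ystar then (1:ℝ) else 0)
      * (if ystar < Y ω then (1:ℝ) else 0) ∂μ)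
    + ∫ ω, (ystar - Y ω) * (if ystar < g (X ω) then (1:ℝ) else 0)
      * (if Y ω ≤ ystar then (1:ℝ) else 0) ∂μ

/-!
Since `(Y − Y*)·1{Y > Y*} = (Y − Y*)⁺` and `(Y* − Y)·1{Y ≤ Y*} = (Y − Y*)⁻`, the risk is
`R_st(g) = E[(Y − Y*)⁺] + E[(Y* − Y)·1{g(X) > Y*}]`, so a recalibration `h` changes it only
through the decision sets `A = {f(X) > Y*}` and `B = {h(f(X)) > Y*}`. Thresholding a proxy `φ` of
a target `c` at `Y*` loses at most `E|c − φ|` against any other decision set. For the ECE bound the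
target is `E[Y | f(X)]`, which may replace `Y` on the `σ(f(X))`-measurable sets `A` and `B`. For
the cutoff bound the target is `f(X)` itself, at no loss, and what remains is
`E[(Y − f(X))·(1_B − 1_A)]`; for monotone `h` both sets are preimages under `f(X)` of upper sets,
hence of intervals, so each of the two terms is at most `Δ_Cutoff(f)`.
-/

namespace SignTesting

variable {Ω 𝒳 : Type*} [mΩ : MeasurableSpace Ω] [MeasurableSpace 𝒳] {μ : Measure Ω}

lemma integrable_of_forall_mem_Icc [IsFiniteMeasure μ] {F : Ω → ℝ} {a b : ℝ} (hF : Measurable F)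
    (hab : ∀ ω, F ω ∈ Icc a b) : Integrable F μ :=
  Integrable.of_bound hF.aestronglyMeasurable (max |a| |b|)
    (ae_of_all _ fun ω => abs_le_max_abs_abs (hab ω).1 (hab ω).2)

lemma sub_csInf_le {S : Set ℝ} {a b : ℝ} (hS : S.Nonempty) (h : ∀ r ∈ S, a - r ≤ b) :
    a - sInf S ≤ b := by
  have := le_csInf hS fun r hr => sub_le_comm.mp (h r hr)
  linarith

lemma Rst_eq [IsFiniteMeasure μ] {X : Ω → 𝒳} {Y : Ω → ℝ} {g : 𝒳 → ℝ}
    (hg : Measurable fun ω => g (X ω)) (hYm : Measurable Y) (hYi : Integrable Y μ) (y : ℝ) :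
    Rst μ X Y g y = ∫ ω, max (Y ω - y) 0 ∂μ + ∫ ω in {ω | y < g (X ω)}, (y - Y ω) ∂μ := by
  have hY' : Integrable (fun ω => Y ω - y) μ := hYi.sub (integrable_const y)
  have hdom : ∀ F : Ω → ℝ, Measurable F → (∀ ω, |F ω| ≤ |Y ω - y|) → Integrable F μ :=
    fun F hF hFY => hY'.mono hF.aestronglyMeasurable
      (Filter.Eventually.of_forall fun ω => by simpa only [Real.norm_eq_abs] using hFY ω)
  have hite : ∀ (p : Ω → Prop) [DecidablePred p], MeasurableSet {ω | p ω} →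
      Measurable fun ω => if p ω then (1:ℝ) else 0 :=
    fun _ _ hp => Measurable.ite hp measurable_const measurable_const
  have hA : MeasurableSet {ω | y < g (X ω)} := measurableSet_lt measurable_const hg
  have h₁ := hdom (fun ω => (Y ω - y) * (if g (X ω) ≤ y then (1:ℝ) else 0)
      * (if y < Y ω then (1:ℝ) else 0))
    (((hYm.sub measurable_const).mul (hite _ (measurableSet_le hg measurable_const))).mul
      (hite _ (measurableSet_lt measurable_const hYm)))
    fun ω => by split_ifs <;> simp
  have h₂ := hdom (fun ω => (y - Y ω) * (if y < g (X ω) then (1:ℝ) else 0)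
      * (if Y ω ≤ y then (1:ℝ) else 0))
    (((measurable_const.sub hYm).mul (hite _ hA)).mul
      (hite _ (measurableSet_le hYm measurable_const)))
    fun ω => by split_ifs <;> simp [abs_sub_comm]
  rw [Rst, ← integral_add h₁ h₂, ← integral_indicator hA,
    ← integral_add hY'.pos_part ((hY'.neg.congr ?_).indicator hA)]
  · refine integral_congr_ae (Filter.Eventually.of_forall fun ω => ?_)
    by_cases hg : y < g (X ω) <;> rcases lt_or_ge y (Y ω) with hY | hY <;>
      simp [indicator, hg, hY, le_of_lt, not_lt.mpr, not_le.mpr]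
  · exact Filter.Eventually.of_forall fun ω => by simp

lemma Rst_sub_Rst [IsFiniteMeasure μ] {X : Ω → 𝒳} {Y : Ω → ℝ} {g₁ g₂ : 𝒳 → ℝ}
    (hg₁ : Measurable fun ω => g₁ (X ω)) (hg₂ : Measurable fun ω => g₂ (X ω))
    (hYm : Measurable Y) (hYi : Integrable Y μ) (y : ℝ) :
    Rst μ X Y g₁ y - Rst μ X Y g₂ y
      = ∫ ω in {ω | y < g₁ (X ω)}, (y - Y ω) ∂μ - ∫ ω in {ω | y < g₂ (X ω)}, (y - Y ω) ∂μ := by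
  rw [Rst_eq hg₁ hYm hYi, Rst_eq hg₂ hYm hYi, add_sub_add_left_eq_sub]

lemma setIntegral_lt_sub_setIntegral_le_integral_abs_sub [IsFiniteMeasure μ] {c φ : Ω → ℝ}
    {B : Set Ω} (hφm : Measurable φ) (hφ : Integrable φ μ) (hc : Integrable c μ)
    (hB : MeasurableSet B) (y : ℝ) :
    ∫ ω in {ω | y < φ ω}, (y - c ω) ∂μ - ∫ ω in B, (y - c ω) ∂μ ≤ ∫ ω, |c ω - φ ω| ∂μ := by
  have hA : MeasurableSet {ω | y < φ ω} := measurableSet_lt measurable_const hφm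
  have hyc : Integrable (fun ω => y - c ω) μ := (integrable_const y).sub hc
  rw [← integral_indicator hA, ← integral_indicator hB,
    ← integral_sub (hyc.indicator hA) (hyc.indicator hB)]
  refine integral_mono ((hyc.indicator hA).sub (hyc.indicator hB)) (hc.sub hφ).abs fun ω => ?_
  by_cases hωA : y < φ ω <;> by_cases hωB : ω ∈ B <;> simp [indicator, hωA, hωB] <;>
    linarith [le_abs_self (c ω - φ ω), neg_abs_le (c ω - φ ω), abs_nonneg (c ω - φ ω)]

lemma setIntegral_const_sub_condExp {m : MeasurableSpace Ω} (hm : m ≤ mΩ) [IsFiniteMeasure μ]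
    {Y : Ω → ℝ} (hY : Integrable Y μ) {A : Set Ω} (hA : MeasurableSet[m] A) (c : ℝ) :
    ∫ ω in A, (c - μ[Y | m] ω) ∂μ = ∫ ω in A, (c - Y ω) ∂μ := by
  rw [integral_sub (integrable_const c).integrableOn integrable_condExp.integrableOn,
    integral_sub (integrable_const c).integrableOn hY.integrableOn, setIntegral_condExp hm hY hA]

lemma integral_sub_mul_indicator_eq_setIntegral {Y φ : Ω → ℝ} (hφ : Measurable φ) {I : Set ℝ}
    (hI : MeasurableSet I) :
    ∫ ω, (Y ω - φ ω) * I.indicator 1 (φ ω) ∂μ = ∫ ω in φ ⁻¹' I, (Y ω - φ ω) ∂μ := by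
  rw [← integral_indicator (hφ hI)]
  congr 1 with ω
  by_cases hω : φ ω ∈ I <;> simp [indicator, hω]

lemma abs_setIntegral_preimage_le_cutoffCE {X : Ω → 𝒳} {Y : Ω → ℝ} {f : 𝒳 → ℝ}
    (hφ : Measurable fun ω => f (X ω)) (hYφ : Integrable (fun ω => Y ω - f (X ω)) μ)
    (hf01 : ∀ x, f x ∈ Icc (0:ℝ) 1) {S : Set ℝ} (hS : S.OrdConnected) :
    |∫ ω in (fun ω => f (X ω)) ⁻¹' S, (Y ω - f (X ω)) ∂μ| ≤ cutoffCE μ X Y f := by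
  have hS' : (S ∩ Icc 0 1).OrdConnected := hS.inter ordConnected_Icc
  have hpre : (fun ω => f (X ω)) ⁻¹' S = (fun ω => f (X ω)) ⁻¹' (S ∩ Icc 0 1) := by
    ext ω; simp [hf01 (X ω)]
  rw [hpre, ← integral_sub_mul_indicator_eq_setIntegral hφ hS'.measurableSet]
  have hbdd : BddAbove (range fun I : {I : Set ℝ // I ⊆ Icc 0 1 ∧ I.OrdConnected} =>
      |∫ ω, (Y ω - f (X ω)) * I.1.indicator 1 (f (X ω)) ∂μ|) := by
    refine ⟨∫ ω, |Y ω - f (X ω)| ∂μ, ?_⟩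
    rintro _ ⟨I, rfl⟩
    dsimp only
    rw [integral_sub_mul_indicator_eq_setIntegral hφ I.2.2.measurableSet]
    exact (abs_integral_le_integral_abs).trans
      (setIntegral_le_integral hYφ.abs (Filter.Eventually.of_forall fun ω => abs_nonneg _))
  exact le_ciSup hbdd ⟨S ∩ Icc 0 1, inter_subset_right, hS'⟩

lemma Rst_sub_Rst_comp_le_two_mul_cutoffCE [IsFiniteMeasure μ] {X : Ω → 𝒳} {Y : Ω → ℝ}
    {f : 𝒳 → ℝ} (hφ : Measurable fun ω => f (X ω)) (hYm : Measurable Y) (hYi : Integrable Y μ)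
    (hφi : Integrable (fun ω => f (X ω)) μ) (hf01 : ∀ x, f x ∈ Icc (0:ℝ) 1) {h : ℝ → ℝ}
    (hh : Monotone h) (y : ℝ) :
    Rst μ X Y f y - Rst μ X Y (fun x => h (f x)) y ≤ 2 * cutoffCE μ X Y f := by
  have hU : {t | y < h t}.OrdConnected :=
    IsUpperSet.ordConnected fun _ _ hab hya => hya.trans_le (hh hab)
  have hYφ : Integrable (fun ω => Y ω - f (X ω)) μ := hYi.sub hφi
  have hyφ : Integrable (fun ω => y - f (X ω)) μ := (integrable_const y).sub hφi
  have hsplit : ∀ s : Set Ω, ∫ ω in s, (y - Y ω) ∂μ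
      = ∫ ω in s, (y - f (X ω)) ∂μ - ∫ ω in s, (Y ω - f (X ω)) ∂μ := fun s => by
    rw [← integral_sub hyφ.integrableOn hYφ.integrableOn]
    congr 1 with ω
    ring
  have hregret := setIntegral_lt_sub_setIntegral_le_integral_abs_sub hφ hφi hφi
    (B := {ω | y < h (f (X ω))}) (hφ hU.measurableSet) y
  simp only [sub_self, abs_zero, integral_zero] at hregret
  have hcutA : |∫ ω in {ω | y < f (X ω)}, (Y ω - f (X ω)) ∂μ| ≤ cutoffCE μ X Y f :=
    abs_setIntegral_preimage_le_cutoffCE hφ hYφ hf01 ordConnected_Ioi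
  have hcutB : |∫ ω in {ω | y < h (f (X ω))}, (Y ω - f (X ω)) ∂μ| ≤ cutoffCE μ X Y f :=
    abs_setIntegral_preimage_le_cutoffCE hφ hYφ hf01 hU
  rw [Rst_sub_Rst (g₂ := fun x => h (f x)) hφ (hh.measurable.comp hφ) hYm hYi, hsplit, hsplit]
  linarith [neg_abs_le (∫ ω in {ω | y < f (X ω)}, (Y ω - f (X ω)) ∂μ),
    le_abs_self (∫ ω in {ω | y < h (f (X ω))}, (Y ω - f (X ω)) ∂μ)]

lemma Rst_sub_Rst_comp_le_eceCE [IsFiniteMeasure μ] {X : Ω → 𝒳} {Y : Ω → ℝ}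
    {f : 𝒳 → ℝ} (hφ : Measurable fun ω => f (X ω)) (hYm : Measurable Y) (hYi : Integrable Y μ)
    (hφi : Integrable (fun ω => f (X ω)) μ) {h : ℝ → ℝ} (hh : Measurable h) (y : ℝ) :
    Rst μ X Y f y - Rst μ X Y (fun x => h (f x)) y ≤ eceCE μ X Y f := by
  have hm : MeasurableSpace.comap (fun ω => f (X ω)) inferInstance ≤ mΩ := hφ.comap_le
  have hA : MeasurableSet[MeasurableSpace.comap (fun ω => f (X ω)) inferInstance]
      {ω | y < f (X ω)} := ⟨Ioi y, measurableSet_Ioi, rfl⟩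
  have hB : MeasurableSet[MeasurableSpace.comap (fun ω => f (X ω)) inferInstance]
      {ω | y < h (f (X ω))} :=
    ⟨{t | y < h t}, measurableSet_lt measurable_const hh, rfl⟩
  rw [Rst_sub_Rst (g₂ := fun x => h (f x)) hφ (hh.comp hφ) hYm hYi,
    ← setIntegral_const_sub_condExp hm hYi hA, ← setIntegral_const_sub_condExp hm hYi hB]
  exact setIntegral_lt_sub_setIntegral_le_integral_abs_sub hφ hφi integrable_condExp (hm _ hB) y

end SignTesting

open SignTesting in
theorem sign_testing_risk_gaps_general {Ω 𝒳 : Type*} [MeasurableSpace Ω] [MeasurableSpace 𝒳]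
    (μ : Measure Ω) [IsProbabilityMeasure μ]
    (X : Ω → 𝒳) (Y : Ω → ℝ) (f : 𝒳 → ℝ)
    (hX : Measurable X) (hY : Measurable Y) (hf : Measurable f)
    (hY01 : ∀ ω, Y ω ∈ Icc (0:ℝ) 1) (hf01 : ∀ x, f x ∈ Icc (0:ℝ) 1)
    (ystar : ℝ) :
    (Rst μ X Y f ystar -
        sInf {r : ℝ | ∃ h : ℝ → ℝ, Monotone h ∧ (∀ t, h t ∈ Icc (0:ℝ) 1) ∧
          r = Rst μ X Y (fun x => h (f x)) ystar}
      ≤ 2 * cutoffCE μ X Y f) ∧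
    (Rst μ X Y f ystar -
        sInf {r : ℝ | ∃ h : ℝ → ℝ, Measurable h ∧ (∀ t, h t ∈ Icc (0:ℝ) 1) ∧
          r = Rst μ X Y (fun x => h (f x)) ystar}
      ≤ eceCE μ X Y f) := by
  have hφ : Measurable fun ω => f (X ω) := hf.comp hX
  have hYi : Integrable Y μ := integrable_of_forall_mem_Icc hY hY01
  have hφi : Integrable (fun ω => f (X ω)) μ := integrable_of_forall_mem_Icc hφ fun ω => hf01 (X ω)
  refine ⟨sub_csInf_le ⟨_, fun _ => 0, monotone_const, fun _ => ⟨le_rfl, zero_le_one⟩, rfl⟩ ?_,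
    sub_csInf_le ⟨_, fun _ => 0, measurable_const, fun _ => ⟨le_rfl, zero_le_one⟩, rfl⟩ ?_⟩
  · rintro _ ⟨h, hh, -, rfl⟩
    exact Rst_sub_Rst_comp_le_two_mul_cutoffCE hφ hY hYi hφi hf01 hh ystar
  · rintro _ ⟨h, hh, -, rfl⟩
    exact Rst_sub_Rst_comp_le_eceCE hφ hY hYi hφi hh ystar

/-- For the sign-testing risk: (i) the monotone risk gap is at most `2·Δ_Cutoff(f)`, and
(ii) the unconstrained risk gap is at most `Δ_ECE(f)`. -/
theorem sign_testing_risk_gaps {Ω 𝒳 : Type*} [MeasurableSpace Ω] [MeasurableSpace 𝒳]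
    (μ : Measure Ω) [IsProbabilityMeasure μ]
    (X : Ω → 𝒳) (Y : Ω → ℝ) (f : 𝒳 → ℝ)
    (hX : Measurable X) (hY : Measurable Y) (hf : Measurable f)
    (hY01 : ∀ ω, Y ω ∈ Icc (0:ℝ) 1) (hf01 : ∀ x, f x ∈ Icc (0:ℝ) 1)
    (ystar : ℝ) (hystar : ystar ∈ Icc (0:ℝ) 1) :
    (Rst μ X Y f ystar -
        sInf {r : ℝ | ∃ h : ℝ → ℝ, Monotone h ∧ (∀ t, h t ∈ Icc (0:ℝ) 1) ∧
          r = Rst μ X Y (fun x => h (f x)) ystar}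
      ≤ 2 * cutoffCE μ X Y f) ∧
    (Rst μ X Y f ystar -
        sInf {r : ℝ | ∃ h : ℝ → ℝ, Measurable h ∧ (∀ t, h t ∈ Icc (0:ℝ) 1) ∧
          r = Rst μ X Y (fun x => h (f x)) ystar}
      ≤ eceCE μ X Y f) :=
  sign_testing_risk_gaps_general μ X Y f hX hY hf hY01 hf01 ystar
end

section
/- Suppose Y ∈ {0,1} and ℓ: {0,1} × [0,1] → ℝ admits a Schervish representation with a probability measure ν on [0,1], i.e., ℓ(y, q) = ∫ ℓ_bd(y, 1{q ≥ τ}; τ) dν(τ) for all y ∈ {0,1} and q ∈ [0,1]. Then for any measurable forecast f: 𝒳 → [0,1]: (i) E[ℓ(Y, f(X))] − inf over all measurable h: [0,1] → [0,1] of E[ℓ(Y, h(f(X)))] ≤ Δ_ECE(f); and (ii) E[ℓ(Y, f(X))] − inf over all monotone non-decreasing h: [0,1] → [0,1] of E[ℓ(Y, h(f(X)))] ≤ 2·Δ_Cutoff(f). -/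
open MeasureTheory Set

/-- The binary decision loss `ℓ_bd(y, ŷ; τ) = τ(1−y)ŷ + (1−τ)y(1−ŷ)`. -/
noncomputable def lbd (y yhat τ : ℝ) : ℝ := τ * (1 - y) * yhat + (1 - τ) * y * (1 - yhat)

/-!
Since `lbd y a τ - lbd y b τ = (a - b) * (τ - y)`, Fubini writes the risk gap between the
forecast `g = f ∘ X` and a post-processing `h ∘ g` as the `ν`-average over thresholds `τ` of
`E[φ_τ * (τ - Y)]`, where `φ_τ = 1{τ ≤ g} - 1{τ ≤ h ∘ g}`. As `φ_τ` vanishes unless `τ` lies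
between `g` and `h ∘ g`, it has the sign of `g - τ`, so `E[φ_τ * (τ - Y)] ≤ E[φ_τ * (g - Y)]`.
Since `φ_τ` is a function of `g` with values in `[-1, 1]`, replacing `Y` by `E[Y | g]` bounds this
by the ECE. For monotone `h`, `φ_τ` is the difference of the indicators (of `g`) of the two
intervals `{x ≥ τ | h x < τ}` and `{x < τ | h x ≥ τ}`, and each contributes at most the cutoff
calibration error.
-/

lemma lbd_sub_lbd (y a b τ : ℝ) : lbd y a τ - lbd y b τ = (a - b) * (τ - y) := by
  simp only [lbd]; ring

lemma lbd_mem_Icc {y a τ : ℝ} (hy : y ∈ Icc (0:ℝ) 1) (ha : a ∈ Icc (0:ℝ) 1)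
    (hτ : τ ∈ Icc (0:ℝ) 1) : lbd y a τ ∈ Icc (0:ℝ) 1 := by
  obtain ⟨hy0, hy1⟩ := hy
  obtain ⟨ha0, ha1⟩ := ha
  obtain ⟨hτ0, hτ1⟩ := hτ
  have h₁ : 0 ≤ (1 - y) * a := mul_nonneg (by linarith) ha0
  have h₂ : 0 ≤ y * (1 - a) := mul_nonneg hy0 (by linarith)
  simp only [lbd, mul_assoc]
  constructor <;> nlinarith

lemma ite_mem_Icc (p : Prop) [Decidable p] : (if p then (1:ℝ) else 0) ∈ Icc (0:ℝ) 1 := by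
  split_ifs <;> simp

lemma abs_ite_sub_ite_le_one (p q : Prop) [Decidable p] [Decidable q] :
    |(if p then (1:ℝ) else 0) - (if q then 1 else 0)| ≤ 1 := by
  split_ifs <;> simp

lemma abs_indicator_one_le_one (s : Set ℝ) (x : ℝ) : |s.indicator (1 : ℝ → ℝ) x| ≤ 1 := by
  rw [← Real.norm_eq_abs]
  exact (norm_indicator_le_norm_self (s := s) 1 x).trans_eq norm_one

lemma ite_sub_ite_mul_sub_nonpos (τ x y : ℝ) :
    ((if τ ≤ x then (1:ℝ) else 0) - (if τ ≤ y then 1 else 0)) * (τ - x) ≤ 0 := by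
  split_ifs with hx hy <;> linarith

lemma ite_sub_ite_eq_indicator_sub_indicator (τ x : ℝ) (h : ℝ → ℝ) :
    (if τ ≤ x then (1:ℝ) else 0) - (if τ ≤ h x then 1 else 0)
      = (Ici τ ∩ h ⁻¹' Iio τ).indicator 1 x - (Iio τ ∩ h ⁻¹' Ici τ).indicator 1 x := by
  by_cases hx : τ ≤ x <;> by_cases hhx : τ ≤ h x <;> simp [hx, hhx, lt_iff_not_ge]

lemma measurable_ite_sub_ite {α : Type*} {_ : MeasurableSpace α} {k₁ k₂ : α → ℝ}
    (hk₁ : Measurable k₁) (hk₂ : Measurable k₂) (τ : ℝ) :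
    Measurable fun a => (if τ ≤ k₁ a then (1:ℝ) else 0) - (if τ ≤ k₂ a then 1 else 0) :=
  (Measurable.ite (measurableSet_le measurable_const hk₁) measurable_const measurable_const).sub
    (Measurable.ite (measurableSet_le measurable_const hk₂) measurable_const measurable_const)

lemma sub_csInf_le_of_forall_sub_le {S : Set ℝ} {a C : ℝ} (hS : S.Nonempty)
    (h : ∀ r ∈ S, a - r ≤ C) : a - sInf S ≤ C := by
  have := le_csInf hS fun r hr => sub_le_comm.1 (h r hr)
  linarith

section RiskGap

variable {Ω : Type*} [mΩ : MeasurableSpace Ω] {μ : Measure Ω} {Y : Ω → ℝ}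

lemma integrable_lbd_ite_prod [IsFiniteMeasure μ] {ν : Measure ℝ} [IsFiniteMeasure ν]
    (hY : Measurable Y) (hY01 : ∀ ω, Y ω ∈ Icc (0:ℝ) 1) (hν : ν (Icc (0:ℝ) 1)ᶜ = 0)
    {k : Ω → ℝ} (hk : Measurable k) :
    Integrable (fun p : Ω × ℝ => lbd (Y p.1) (if p.2 ≤ k p.1 then 1 else 0) p.2) (μ.prod ν) := by
  have hτ : ∀ᵐ p ∂μ.prod ν, p.2 ∈ Icc (0:ℝ) 1 :=
    Measure.quasiMeasurePreserving_snd.ae (mem_ae_iff.2 hν)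
  refine Integrable.of_mem_Icc 0 1 ?_ ?_
  · have hstep : Measurable fun p : Ω × ℝ => if p.2 ≤ k p.1 then (1:ℝ) else 0 :=
      Measurable.ite (measurableSet_le measurable_snd (hk.comp measurable_fst))
        measurable_const measurable_const
    simp only [lbd]
    fun_prop
  · filter_upwards [hτ] with p hp
    exact lbd_mem_Icc (hY01 p.1) (ite_mem_Icc _) hp

lemma integral_sub_integral_le_of_forall_threshold [IsFiniteMeasure μ] {ν : Measure ℝ}
    [IsProbabilityMeasure ν] {ℓ : ℝ → ℝ → ℝ}
    (hrep : ∀ y ∈ ({0, 1} : Set ℝ), ∀ q ∈ Icc (0:ℝ) 1,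
      ℓ y q = ∫ τ, lbd y (if τ ≤ q then (1:ℝ) else 0) τ ∂ν)
    (hY : Measurable Y) (hYbin : ∀ ω, Y ω = 0 ∨ Y ω = 1) (hν : ν (Icc (0:ℝ) 1)ᶜ = 0)
    {k₁ k₂ : Ω → ℝ} (hk₁ : Measurable k₁) (hk₂ : Measurable k₂)
    (hk₁01 : ∀ ω, k₁ ω ∈ Icc (0:ℝ) 1) (hk₂01 : ∀ ω, k₂ ω ∈ Icc (0:ℝ) 1) {C : ℝ}
    (hC : ∀ τ, ∫ ω, ((if τ ≤ k₁ ω then (1:ℝ) else 0) - (if τ ≤ k₂ ω then 1 else 0))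
      * (τ - Y ω) ∂μ ≤ C) :
    ∫ ω, ℓ (Y ω) (k₁ ω) ∂μ - ∫ ω, ℓ (Y ω) (k₂ ω) ∂μ ≤ C := by
  have hY01 : ∀ ω, Y ω ∈ Icc (0:ℝ) 1 := fun ω => by rcases hYbin ω with h | h <;> simp [h]
  have h₁ := integrable_lbd_ite_prod (μ := μ) hY hY01 hν hk₁
  have h₂ := integrable_lbd_ite_prod (μ := μ) hY hY01 hν hk₂
  have hD := (h₁.sub h₂).congr (ae_of_all _ fun p => lbd_sub_lbd (Y p.1) _ _ p.2)
  have hrisk : ∀ k : Ω → ℝ, (∀ ω, k ω ∈ Icc (0:ℝ) 1) → ∫ ω, ℓ (Y ω) (k ω) ∂μ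
      = ∫ ω, ∫ τ, lbd (Y ω) (if τ ≤ k ω then 1 else 0) τ ∂ν ∂μ := fun k hk01 =>
    integral_congr_ae (ae_of_all _ fun ω => hrep _ (hYbin ω) _ (hk01 ω))
  calc ∫ ω, ℓ (Y ω) (k₁ ω) ∂μ - ∫ ω, ℓ (Y ω) (k₂ ω) ∂μ
      = ∫ p, lbd (Y p.1) (if p.2 ≤ k₁ p.1 then 1 else 0) p.2
          - lbd (Y p.1) (if p.2 ≤ k₂ p.1 then 1 else 0) p.2 ∂μ.prod ν := by
        rw [hrisk k₁ hk₁01, hrisk k₂ hk₂01, ← integral_prod _ h₁, ← integral_prod _ h₂,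
          ← integral_sub h₁ h₂]
    _ = ∫ τ, ∫ ω, ((if τ ≤ k₁ ω then (1:ℝ) else 0) - (if τ ≤ k₂ ω then 1 else 0))
          * (τ - Y ω) ∂μ ∂ν := by
        simp only [lbd_sub_lbd]
        exact integral_prod_symm _ hD
    _ ≤ ∫ _, C ∂ν := integral_mono hD.integral_prod_right (integrable_const C) hC
    _ = C := by simp

lemma integral_ite_sub_ite_mul_le [IsFiniteMeasure μ] {k₁ k₂ : Ω → ℝ} (hk₁ : Measurable k₁)
    (hk₂ : Measurable k₂) (hk₁int : Integrable k₁ μ) (hY : Integrable Y μ) (τ : ℝ) :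
    ∫ ω, ((if τ ≤ k₁ ω then (1:ℝ) else 0) - (if τ ≤ k₂ ω then 1 else 0)) * (τ - Y ω) ∂μ
      ≤ ∫ ω, ((if τ ≤ k₁ ω then (1:ℝ) else 0) - (if τ ≤ k₂ ω then 1 else 0))
          * (k₁ ω - Y ω) ∂μ := by
  have hφ := (measurable_ite_sub_ite hk₁ hk₂ τ).aestronglyMeasurable (μ := μ)
  have hbdd := ae_of_all μ fun ω => (abs_ite_sub_ite_le_one (τ ≤ k₁ ω) (τ ≤ k₂ ω))
  refine integral_mono (((integrable_const τ).sub hY).bdd_mul hφ hbdd)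
    ((hk₁int.sub hY).bdd_mul hφ hbdd) fun ω => ?_
  have := ite_sub_ite_mul_sub_nonpos τ (k₁ ω) (k₂ ω)
  simp only
  linarith

lemma integral_mul_sub_le_integral_abs_condExp_sub [IsFiniteMeasure μ] {m : MeasurableSpace Ω}
    (hm : m ≤ mΩ) {φ g : Ω → ℝ} (hφ : StronglyMeasurable[m] φ) (hφ1 : ∀ ω, |φ ω| ≤ 1)
    (hY : Integrable Y μ) (hg : Integrable g μ) :
    ∫ ω, φ ω * (g ω - Y ω) ∂μ ≤ ∫ ω, |μ[Y | m] ω - g ω| ∂μ := by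
  have hbdd : ∀ᵐ ω ∂μ, ‖φ ω‖ ≤ 1 := ae_of_all _ hφ1
  have hφμ := hφ.mono hm |>.aestronglyMeasurable (μ := μ)
  have hpull : ∫ ω, φ ω * Y ω ∂μ = ∫ ω, φ ω * μ[Y | m] ω ∂μ :=
    calc ∫ ω, φ ω * Y ω ∂μ = ∫ ω, μ[φ * Y | m] ω ∂μ := (integral_condExp hm).symm
      _ = ∫ ω, φ ω * μ[Y | m] ω ∂μ :=
        integral_congr_ae (condExp_stronglyMeasurable_mul_of_bound hm hφ hY 1 hbdd)
  have hπ : Integrable (μ[Y | m]) μ := integrable_condExp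
  calc ∫ ω, φ ω * (g ω - Y ω) ∂μ = ∫ ω, φ ω * (g ω - μ[Y | m] ω) ∂μ := by
        simp only [mul_sub]
        rw [integral_sub (hg.bdd_mul hφμ hbdd) (hY.bdd_mul hφμ hbdd),
          integral_sub (hg.bdd_mul hφμ hbdd) (hπ.bdd_mul hφμ hbdd), hpull]
    _ ≤ ∫ ω, |μ[Y | m] ω - g ω| ∂μ := by
        refine integral_mono ((hg.sub hπ).bdd_mul hφμ hbdd) (hπ.sub hg).abs fun ω => ?_
        calc φ ω * (g ω - μ[Y | m] ω) ≤ |φ ω| * |g ω - μ[Y | m] ω| :=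
              (le_abs_self _).trans_eq (abs_mul _ _)
          _ ≤ |μ[Y | m] ω - g ω| := by
              rw [abs_sub_comm]
              exact mul_le_of_le_one_left (abs_nonneg _) (hφ1 ω)

variable {𝒳 : Type*} [MeasurableSpace 𝒳] {X : Ω → 𝒳} {f : 𝒳 → ℝ}

lemma abs_integral_mul_indicator_le_cutoffCE (hf01 : ∀ x, f x ∈ Icc (0:ℝ) 1)
    (hY : Integrable Y μ) (hfX : Integrable (fun ω => f (X ω)) μ) {I : Set ℝ}
    (hI : I.OrdConnected) :
    |∫ ω, (Y ω - f (X ω)) * I.indicator (1 : ℝ → ℝ) (f (X ω)) ∂μ| ≤ cutoffCE μ X Y f := by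
  have hbdd : BddAbove (range fun J : {J : Set ℝ // J ⊆ Icc 0 1 ∧ J.OrdConnected} =>
      |∫ ω, (Y ω - f (X ω)) * J.1.indicator (1 : ℝ → ℝ) (f (X ω)) ∂μ|) := by
    refine ⟨∫ ω, |Y ω - f (X ω)| ∂μ, ?_⟩
    rintro _ ⟨J, rfl⟩
    dsimp only
    rw [← Real.norm_eq_abs]
    refine norm_integral_le_of_norm_le (hY.sub hfX).abs (ae_of_all _ fun ω => ?_)
    rw [Real.norm_eq_abs, abs_mul]
    exact mul_le_of_le_one_right (abs_nonneg _) (abs_indicator_one_le_one _ _)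
  have hIcc : ∀ ω, I.indicator (1 : ℝ → ℝ) (f (X ω))
      = (I ∩ Icc 0 1).indicator 1 (f (X ω)) := fun ω => by
    rw [inter_indicator_one, Pi.mul_apply, indicator_of_mem (hf01 _), Pi.one_apply, mul_one]
  simp only [hIcc]
  exact le_ciSup hbdd ⟨I ∩ Icc 0 1, inter_subset_right, hI.inter ordConnected_Icc⟩

lemma integral_ite_sub_ite_mul_le_two_mul_cutoffCE [IsFiniteMeasure μ]
    (hfX : Measurable fun ω => f (X ω)) (hf01 : ∀ x, f x ∈ Icc (0:ℝ) 1) (hY : Integrable Y μ)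
    {h : ℝ → ℝ} (hh : Monotone h) (τ : ℝ) :
    ∫ ω, ((if τ ≤ f (X ω) then (1:ℝ) else 0) - (if τ ≤ h (f (X ω)) then 1 else 0))
      * (f (X ω) - Y ω) ∂μ ≤ 2 * cutoffCE μ X Y f := by
  have hfXint : Integrable (fun ω => f (X ω)) μ :=
    Integrable.of_mem_Icc 0 1 hfX.aemeasurable (ae_of_all _ fun ω => hf01 (X ω))
  have hint : ∀ I : Set ℝ, I.OrdConnected →
      Integrable (fun ω => (Y ω - f (X ω)) * I.indicator 1 (f (X ω))) μ := fun I hI =>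
    (hY.sub hfXint).mul_bdd
      ((measurable_one.indicator hI.measurableSet).comp hfX).aestronglyMeasurable
      (ae_of_all _ fun ω => abs_indicator_one_le_one _ _)
  set I₁ := Ici τ ∩ h ⁻¹' Iio τ
  set I₂ := Iio τ ∩ h ⁻¹' Ici τ
  have hI₁ : I₁.OrdConnected := ordConnected_Ici.inter (ordConnected_Iio.preimage_mono hh)
  have hI₂ : I₂.OrdConnected := ordConnected_Iio.inter (ordConnected_Ici.preimage_mono hh)
  calc _ = ∫ ω, (Y ω - f (X ω)) * I₂.indicator 1 (f (X ω))
          - (Y ω - f (X ω)) * I₁.indicator 1 (f (X ω)) ∂μ := by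
        refine integral_congr_ae (ae_of_all _ fun ω => ?_)
        simp only [ite_sub_ite_eq_indicator_sub_indicator τ (f (X ω)) h]
        ring
    _ = ∫ ω, (Y ω - f (X ω)) * I₂.indicator 1 (f (X ω)) ∂μ
          - ∫ ω, (Y ω - f (X ω)) * I₁.indicator 1 (f (X ω)) ∂μ :=
        integral_sub (hint I₂ hI₂) (hint I₁ hI₁)
    _ ≤ 2 * cutoffCE μ X Y f := by
        have h₁ := abs_integral_mul_indicator_le_cutoffCE hf01 hY hfXint hI₁
        have h₂ := abs_integral_mul_indicator_le_cutoffCE hf01 hY hfXint hI₂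
        linarith [le_abs_self (∫ ω, (Y ω - f (X ω)) * I₂.indicator 1 (f (X ω)) ∂μ),
          neg_abs_le (∫ ω, (Y ω - f (X ω)) * I₁.indicator 1 (f (X ω)) ∂μ)]

end RiskGap

/-- If `ℓ` admits a Schervish representation
`ℓ(y, q) = ∫ ℓ_bd(y, 1{q ≥ τ}; τ) dν(τ)` for a probability measure `ν` on `[0,1]`, then
(i) the unconstrained risk gap is at most `Δ_ECE(f)` and (ii) the monotone risk gap is at
most `2·Δ_Cutoff(f)`. -/
theorem schervish_risk_gaps {Ω 𝒳 : Type*} [MeasurableSpace Ω] [MeasurableSpace 𝒳]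
    (μ : Measure Ω) [IsProbabilityMeasure μ]
    (X : Ω → 𝒳) (Y : Ω → ℝ) (f : 𝒳 → ℝ)
    (hX : Measurable X) (hY : Measurable Y) (hf : Measurable f)
    (hYbin : ∀ ω, Y ω = 0 ∨ Y ω = 1) (hf01 : ∀ x, f x ∈ Icc (0:ℝ) 1)
    (ν : Measure ℝ) [IsProbabilityMeasure ν] (hν : ν (Icc (0:ℝ) 1)ᶜ = 0)
    (ℓ : ℝ → ℝ → ℝ)
    (hrep : ∀ y ∈ ({0, 1} : Set ℝ), ∀ q ∈ Icc (0:ℝ) 1,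
      ℓ y q = ∫ τ, lbd y (if τ ≤ q then (1:ℝ) else 0) τ ∂ν) :
    ((∫ ω, ℓ (Y ω) (f (X ω)) ∂μ) -
        sInf {r : ℝ | ∃ h : ℝ → ℝ, Measurable h ∧ (∀ t, h t ∈ Icc (0:ℝ) 1) ∧
          r = ∫ ω, ℓ (Y ω) (h (f (X ω))) ∂μ}
      ≤ eceCE μ X Y f) ∧
    ((∫ ω, ℓ (Y ω) (f (X ω)) ∂μ) -
        sInf {r : ℝ | ∃ h : ℝ → ℝ, Monotone h ∧ (∀ t, h t ∈ Icc (0:ℝ) 1) ∧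
          r = ∫ ω, ℓ (Y ω) (h (f (X ω))) ∂μ}
      ≤ 2 * cutoffCE μ X Y f) := by
  have hg : Measurable fun ω => f (X ω) := hf.comp hX
  have hgint : Integrable (fun ω => f (X ω)) μ :=
    Integrable.of_mem_Icc 0 1 hg.aemeasurable (ae_of_all _ fun ω => hf01 (X ω))
  have hYint : Integrable Y μ := Integrable.of_mem_Icc 0 1 hY.aemeasurable
    (ae_of_all _ fun ω => by rcases hYbin ω with h | h <;> simp [h])
  have gap_le : ∀ {h : ℝ → ℝ} {C : ℝ}, Measurable h → (∀ t, h t ∈ Icc (0:ℝ) 1) →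
      (∀ τ, ∫ ω, ((if τ ≤ f (X ω) then (1:ℝ) else 0) - (if τ ≤ h (f (X ω)) then 1 else 0))
        * (f (X ω) - Y ω) ∂μ ≤ C) →
      ∫ ω, ℓ (Y ω) (f (X ω)) ∂μ - ∫ ω, ℓ (Y ω) (h (f (X ω))) ∂μ ≤ C := fun hh hh01 hC =>
    integral_sub_integral_le_of_forall_threshold hrep hY hYbin hν hg (hh.comp hg)
      (fun ω => hf01 (X ω)) (fun ω => hh01 _) fun τ =>
        (integral_ite_sub_ite_mul_le hg (hh.comp hg) hgint hYint τ).trans (hC τ)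
  have hzero : ∀ t : ℝ, (fun _ : ℝ => (0:ℝ)) t ∈ Icc (0:ℝ) 1 := fun _ => ⟨le_rfl, zero_le_one⟩
  refine ⟨sub_csInf_le_of_forall_sub_le ⟨_, _, measurable_const, hzero, rfl⟩ ?_,
    sub_csInf_le_of_forall_sub_le ⟨_, _, monotone_const, hzero, rfl⟩ ?_⟩
  · rintro _ ⟨h, hh, hh01, rfl⟩
    have hφ τ := measurable_ite_sub_ite (comap_measurable fun ω => f (X ω))
      (hh.comp (comap_measurable fun ω => f (X ω))) τ
    exact gap_le hh hh01 fun τ => integral_mul_sub_le_integral_abs_condExp_sub hg.comap_le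
      (hφ τ).stronglyMeasurable (fun ω => abs_ite_sub_ite_le_one _ _) hYint hgint
  · rintro _ ⟨h, hh, hh01, rfl⟩
    exact gap_le hh.measurable hh01 (integral_ite_sub_ite_mul_le_two_mul_cutoffCE hg hf01 hYint hh)
end

section
/- Let ε₁,…,εₙ be i.i.d. Rademacher random variables (each equal to ±1 with probability 1/2). Then E[ sup over vectors f ∈ [−1,1]^n satisfying Σ_{i=1}^{n−1} |f_{i+1} − f_i| ≤ M of (1/n)·Σ_{i=1}^n ε_i f_i ] ≤ (2M + 1)/√n. -/
/-!
Write `S_k = ε₁ + ⋯ + ε_k`. Summation by parts gives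
`∑ εᵢ fᵢ = f_n S_n - ∑_{i<n} (f_{i+1} - f_i) S_i`, so for `f` in the constraint set the sum is at
most `|S_n| + M · max_k |S_k|`. The second moment `E S_n² = n` gives `E |S_n| ≤ √n`. By the
reflection principle `P(max_k S_k ≥ λ) ≤ P(|S_n| ≥ λ)` for every level `λ ≥ 1`; summing over `λ`
gives `E max_k S_k ≤ E |S_n|`, and hence `E max_k |S_k| ≤ 2 E |S_n| ≤ 2 √n`.
-/

open MeasureTheory Set
open scoped BigOperators

namespace Finset

theorem abs_sum_range_mul_le_of_sum_abs_sub_le {w e : ℕ → ℝ} {m : ℕ} {M B : ℝ}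
    (hw : |w (m - 1)| ≤ 1) (hvar : ∑ i ∈ range (m - 1), |w (i + 1) - w i| ≤ M)
    (hpartial : ∀ k ≤ m, |∑ i ∈ range k, e i| ≤ B) :
    |∑ i ∈ range m, w i * e i| ≤ |∑ i ∈ range m, e i| + M * B := by
  have hB : 0 ≤ B := by simpa using hpartial 0 (Nat.zero_le m)
  have hlast : |w (m - 1) * ∑ i ∈ range m, e i| ≤ |∑ i ∈ range m, e i| := by
    rw [abs_mul]
    exact mul_le_of_le_one_left (abs_nonneg _) hw
  have hrest : |∑ i ∈ range (m - 1), (w (i + 1) - w i) * ∑ j ∈ range (i + 1), e j| ≤ M * B :=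
    calc _ ≤ ∑ i ∈ range (m - 1), |w (i + 1) - w i| * B := by
          refine (abs_sum_le_sum_abs _ _).trans (sum_le_sum fun i hi => ?_)
          rw [abs_mul]
          exact mul_le_mul_of_nonneg_left (hpartial _ (by simp at hi; omega)) (abs_nonneg _)
      _ ≤ M * B := by
          rw [← sum_mul]
          exact mul_le_mul_of_nonneg_right hvar hB
  have hparts := sum_range_by_parts w e (n := m)
  simp only [smul_eq_mul] at hparts
  rw [hparts]
  exact (abs_sub _ _).trans (add_le_add hlast hrest)

theorem sum_eq_sum_card_le {α : Type*} (s : Finset α) (f : α → ℤ) {N : ℤ}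
    (h0 : ∀ x ∈ s, 0 ≤ f x) (hN : ∀ x ∈ s, f x ≤ N) :
    ∑ x ∈ s, f x = ∑ lam ∈ Icc 1 N, (#{x ∈ s | lam ≤ f x} : ℤ) := by
  have hlevels : ∀ x ∈ s, {lam ∈ Icc 1 N | lam ≤ f x} = Icc 1 (f x) := fun x hx => by
    ext lam
    have := hN x hx
    simp only [mem_filter, mem_Icc]
    omega
  calc ∑ x ∈ s, f x = ∑ x ∈ s, ∑ lam ∈ Icc 1 N, if lam ≤ f x then (1 : ℤ) else 0 :=
        sum_congr rfl fun x hx => by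
          rw [sum_boole, hlevels x hx, Int.card_Icc, Int.toNat_of_nonneg (by linarith [h0 x hx])]
          ring
    _ = ∑ lam ∈ Icc 1 N, ∑ x ∈ s, if lam ≤ f x then (1 : ℤ) else 0 := sum_comm
    _ = _ := by simp only [sum_boole]

end Finset

theorem PMF.integral_uniformOfFintype {α : Type*} [Fintype α] [Nonempty α] [MeasurableSpace α]
    [MeasurableSingletonClass α] (f : α → ℝ) :
    ∫ a, f a ∂(PMF.uniformOfFintype α).toMeasure = 𝔼 a, f a := by
  simp [PMF.integral_eq_sum, PMF.uniformOfFintype_apply, Fintype.expect_eq_sum_div_card,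
    ← Finset.mul_sum, div_eq_inv_mul]

namespace SignWalk

open Finset

variable {n : ℕ}

/-- The `i`-th sign of `ω`, extended by `0` for `i ≥ n`, so that the walk stops at time `n`. -/
def step (ω : Fin n → Bool) (i : ℕ) : ℤ :=
  if h : i < n then (if ω ⟨i, h⟩ then 1 else -1) else 0

def walk (ω : Fin n → Bool) (k : ℕ) : ℤ := ∑ i ∈ range k, step ω i

def maxWalk (ω : Fin n → Bool) : ℤ := (range (n + 1)).sup' nonempty_range_add_one (walk ω)

def maxAbsWalk (ω : Fin n → Bool) : ℤ :=
  (range (n + 1)).sup' nonempty_range_add_one fun k => |walk ω k|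

section Basic

variable (ω : Fin n → Bool)

lemma walk_zero : walk ω 0 = 0 := sum_range_zero _

lemma walk_succ (k : ℕ) : walk ω (k + 1) = walk ω k + step ω k := sum_range_succ _ _

lemma abs_step_le (i : ℕ) : |step ω i| ≤ 1 := by
  unfold step
  split_ifs <;> simp

lemma abs_walk_le (k : ℕ) : |walk ω k| ≤ k :=
  calc |walk ω k| ≤ ∑ i ∈ range k, |step ω i| := abs_sum_le_sum_abs _ _
    _ ≤ ∑ _i ∈ range k, 1 := sum_le_sum fun i _ => abs_step_le ω i
    _ = k := by simp

lemma walk_le_maxWalk {k : ℕ} (hk : k ≤ n) : walk ω k ≤ maxWalk ω :=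
  le_sup' (walk ω) (mem_range_succ_iff.2 hk)

lemma maxWalk_nonneg : 0 ≤ maxWalk ω := by
  simpa [walk_zero] using walk_le_maxWalk ω (Nat.zero_le n)

lemma maxWalk_le : maxWalk ω ≤ n :=
  sup'_le _ _ fun k hk => (le_abs_self _).trans <|
    (abs_walk_le ω k).trans (by exact_mod_cast mem_range_succ_iff.1 hk)

lemma abs_walk_le_maxAbsWalk {k : ℕ} (hk : k ≤ n) : |walk ω k| ≤ maxAbsWalk ω :=
  le_sup' (fun k => |walk ω k|) (mem_range_succ_iff.2 hk)

lemma maxAbsWalk_nonneg : 0 ≤ maxAbsWalk ω :=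
  (abs_nonneg _).trans (abs_walk_le_maxAbsWalk ω (Nat.zero_le n))

lemma step_compl (i : ℕ) : step ωᶜ i = -step ω i := by
  unfold step
  split_ifs <;> simp_all

lemma walk_compl (k : ℕ) : walk ωᶜ k = -walk ω k := by
  simp [walk, step_compl]

lemma maxAbsWalk_le_maxWalk_add_maxWalk_compl : maxAbsWalk ω ≤ maxWalk ω + maxWalk ωᶜ :=
  sup'_le _ _ fun k hk => by
    have hup := walk_le_maxWalk ω (mem_range_succ_iff.1 hk)
    have hdown := walk_le_maxWalk ωᶜ (mem_range_succ_iff.1 hk)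
    rw [walk_compl] at hdown
    have := maxWalk_nonneg ω
    have := maxWalk_nonneg ωᶜ
    exact abs_le.2 ⟨by linarith, by linarith⟩

end Basic

def hitTime (lam : ℤ) (ω : Fin n → Bool) : ℕ :=
  Nat.find (⟨n + 1, Or.inr n.lt_succ_self⟩ : ∃ k, lam ≤ walk ω k ∨ n < k)

def flipFrom (t : ℕ) (ω : Fin n → Bool) : Fin n → Bool :=
  fun i => if (i : ℕ) < t then ω i else !ω i

def reflect (lam : ℤ) (ω : Fin n → Bool) : Fin n → Bool := flipFrom (hitTime lam ω) ω

section Reflection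

variable {lam : ℤ} {ω : Fin n → Bool}

lemma hitTime_le (h : lam ≤ maxWalk ω) : hitTime lam ω ≤ n := by
  obtain ⟨k, hk, hmax⟩ := exists_mem_eq_sup' nonempty_range_add_one (walk ω)
  exact (Nat.find_min' _ (Or.inl (h.trans_eq hmax))).trans (mem_range_succ_iff.1 hk)

lemma le_walk_hitTime (h : lam ≤ maxWalk ω) : lam ≤ walk ω (hitTime lam ω) :=
  (Nat.find_spec (⟨n + 1, Or.inr n.lt_succ_self⟩ : ∃ k, lam ≤ walk ω k ∨ n < k)).resolve_right
    (hitTime_le h).not_gt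

lemma walk_lt_of_lt_hitTime {j : ℕ} (hj : j < hitTime lam ω) : walk ω j < lam :=
  not_le.1 (not_or.1 (Nat.find_min _ hj)).1

lemma walk_hitTime (hlam : 1 ≤ lam) (h : lam ≤ maxWalk ω) : walk ω (hitTime lam ω) = lam := by
  have hle := le_walk_hitTime h
  obtain ⟨t, ht⟩ : ∃ t, hitTime lam ω = t + 1 := Nat.exists_eq_succ_of_ne_zero fun h0 => by
    rw [h0, walk_zero] at hle
    omega
  have hlt := walk_lt_of_lt_hitTime (show t < hitTime lam ω by omega)
  -- steps have size at most one, so the walk cannot jump over `lam`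
  have hstep := (abs_le.1 (abs_step_le ω t)).2
  rw [ht, walk_succ] at hle ⊢
  omega

lemma step_flipFrom (t i : ℕ) :
    step (flipFrom t ω) i = if i < t then step ω i else -step ω i := by
  unfold step flipFrom
  split_ifs <;> simp_all

lemma walk_flipFrom_of_le {t k : ℕ} (hk : k ≤ t) : walk (flipFrom t ω) k = walk ω k :=
  sum_congr rfl fun i hi => by rw [step_flipFrom, if_pos ((mem_range.1 hi).trans_le hk)]

lemma walk_flipFrom_of_ge {t k : ℕ} (hk : t ≤ k) :
    walk (flipFrom t ω) k = 2 * walk ω t - walk ω k := by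
  induction k, hk using Nat.le_induction with
  | base => rw [walk_flipFrom_of_le le_rfl]; ring
  | succ k hk ih => rw [walk_succ, walk_succ, ih, step_flipFrom, if_neg hk.not_gt]; ring

lemma hitTime_reflect (h : lam ≤ maxWalk ω) : hitTime lam (reflect lam ω) = hitTime lam ω := by
  rw [hitTime, Nat.find_eq_iff]
  refine ⟨Or.inl ?_, fun j hj => ?_⟩
  · rw [reflect, walk_flipFrom_of_le le_rfl]
    exact le_walk_hitTime h
  · rw [reflect, walk_flipFrom_of_le hj.le, not_or, not_le, not_lt]
    exact ⟨walk_lt_of_lt_hitTime hj, hj.le.trans (hitTime_le h)⟩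

lemma reflect_reflect (h : lam ≤ maxWalk ω) : reflect lam (reflect lam ω) = ω := by
  funext i
  rw [reflect, hitTime_reflect h]
  by_cases hi : (i : ℕ) < hitTime lam ω <;> simp [reflect, flipFrom, hi]

lemma walk_reflect (hlam : 1 ≤ lam) (h : lam ≤ maxWalk ω) :
    walk (reflect lam ω) n = 2 * lam - walk ω n := by
  rw [reflect, walk_flipFrom_of_ge (hitTime_le h), walk_hitTime hlam h]

end Reflection

lemma reflect_injOn (lam : ℤ) :
    Set.InjOn (reflect lam) {ω : Fin n → Bool | lam ≤ maxWalk ω} :=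
  fun ω h ω' h' heq => by rw [← reflect_reflect h, heq, reflect_reflect h']

/-- **Reflection principle.** A path reaching `lam` that ends below `lam` is reflected after its
first visit to `lam` and then negated; it then ends at most at `-lam`. -/
theorem card_le_maxWalk_le_card_le_abs_walk {lam : ℤ} (hlam : 1 ≤ lam) :
    #{ω : Fin n → Bool | lam ≤ maxWalk ω} ≤ #{ω : Fin n → Bool | lam ≤ |walk ω n|} := by
  have hlow : ∀ ω : Fin n → Bool, lam ≤ maxWalk ω → walk ω n < lam →
      walk (reflect lam ω)ᶜ n ≤ -lam := fun ω h hend => by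
    rw [walk_compl, walk_reflect hlam h]
    omega
  refine card_le_card_of_injOn (fun ω => if lam ≤ walk ω n then ω else (reflect lam ω)ᶜ)
    (fun ω hω => ?_) (fun ω hω ω' hω' heq => ?_)
  · simp only [mem_coe, mem_filter, Finset.mem_univ, true_and] at hω ⊢
    split_ifs with hend
    · exact hend.trans (le_abs_self _)
    · exact le_abs'.2 (Or.inl (by linarith [hlow ω hω (not_le.1 hend)]))
  · simp only [mem_coe, mem_filter, Finset.mem_univ, true_and] at hω hω'
    have hend := congrArg (walk · n) heq
    simp only at heq hend
    split_ifs at heq hend with h h'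
    · exact heq
    · linarith [hlow ω' hω' (not_le.1 h')]
    · linarith [hlow ω hω (not_le.1 h)]
    · exact reflect_injOn lam hω hω' (compl_injective heq)

theorem sum_maxWalk_le : ∑ ω : Fin n → Bool, maxWalk ω ≤ ∑ ω : Fin n → Bool, |walk ω n| := by
  rw [sum_eq_sum_card_le _ _ (fun ω _ => maxWalk_nonneg ω) (fun ω _ => maxWalk_le ω),
    sum_eq_sum_card_le _ _ (fun ω _ => abs_nonneg _) (fun ω _ => abs_walk_le ω n)]
  exact sum_le_sum fun lam hlam => by
    exact_mod_cast card_le_maxWalk_le_card_le_abs_walk (mem_Icc.1 hlam).1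

theorem sum_maxAbsWalk_le :
    ∑ ω : Fin n → Bool, maxAbsWalk ω ≤ 2 * ∑ ω : Fin n → Bool, |walk ω n| :=
  calc ∑ ω : Fin n → Bool, maxAbsWalk ω ≤ ∑ ω : Fin n → Bool, (maxWalk ω + maxWalk ωᶜ) :=
        sum_le_sum fun ω _ => maxAbsWalk_le_maxWalk_add_maxWalk_compl ω
    _ = 2 * ∑ ω : Fin n → Bool, maxWalk ω := by
        rw [sum_add_distrib, compl_involutive.bijective.sum_comp maxWalk]
        ring
    _ ≤ 2 * ∑ ω : Fin n → Bool, |walk ω n| := by linarith [sum_maxWalk_le (n := n)]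

lemma sum_step_mul_step {i j : ℕ} (hi : i < n) (hj : j < n) :
    ∑ ω : Fin n → Bool, step ω i * step ω j = if i = j then 2 ^ n else 0 := by
  split_ifs with hij
  · subst hij
    have hsq : ∀ ω : Fin n → Bool, step ω i * step ω i = 1 := fun ω => by
      unfold step
      split_ifs <;> simp
    simp [hsq]
  · let flip : (Fin n → Bool) → Fin n → Bool :=
      fun ω => Function.update ω ⟨i, hi⟩ (!ω ⟨i, hi⟩)
    have hflip_i : ∀ ω, step (flip ω) i = -step ω i := fun ω => by
      simp only [step, hi, dif_pos, flip, Function.update_self]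
      split_ifs <;> simp_all
    have hflip_j : ∀ ω, step (flip ω) j = step ω j := fun ω => by
      have hne : (⟨j, hj⟩ : Fin n) ≠ ⟨i, hi⟩ := fun h => hij (congrArg Fin.val h).symm
      simp only [step, hj, dif_pos, flip, Function.update_of_ne hne]
    refine sum_ninvolution flip (fun ω => by rw [hflip_i, hflip_j]; ring) (fun ω _ h => ?_)
      (fun _ => mem_univ _) (fun ω => by simp [flip])
    simpa [flip] using congrFun h ⟨i, hi⟩

theorem sum_walk_sq : ∑ ω : Fin n → Bool, walk ω n ^ 2 = 2 ^ n * n :=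
  calc ∑ ω : Fin n → Bool, walk ω n ^ 2
      = ∑ i ∈ range n, ∑ j ∈ range n, ∑ ω : Fin n → Bool, step ω i * step ω j := by
        simp only [walk, sq, sum_mul_sum]
        rw [sum_comm]
        exact sum_congr rfl fun i _ => sum_comm
    _ = ∑ i ∈ range n, ∑ j ∈ range n, if i = j then (2 : ℤ) ^ n else 0 :=
        sum_congr rfl fun i hi => sum_congr rfl fun j hj =>
          sum_step_mul_step (mem_range.1 hi) (mem_range.1 hj)
    _ = ∑ _i ∈ range n, (2 : ℤ) ^ n :=
        sum_congr rfl fun i hi => by rw [sum_ite_eq, if_pos hi]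
    _ = 2 ^ n * n := by simp [mul_comm]

lemma expect_eq_sum_div_two_pow {f : (Fin n → Bool) → ℝ} : 𝔼 ω, f ω = (∑ ω, f ω) / 2 ^ n := by
  simp [Fintype.expect_eq_sum_div_card]

theorem expect_abs_walk_le : 𝔼 ω : Fin n → Bool, |(walk ω n : ℝ)| ≤ √n := by
  have hsq : 𝔼 ω : Fin n → Bool, (walk ω n : ℝ) ^ 2 = n := by
    rw [expect_eq_sum_div_two_pow, div_eq_iff (by positivity)]
    exact_mod_cast (sum_walk_sq.trans (mul_comm _ _))
  have hcs := expect_mul_sq_le_sq_mul_sq univ (fun _ : Fin n → Bool => (1 : ℝ))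
    fun ω => |(walk ω n : ℝ)|
  simp only [one_pow, one_mul, Fintype.expect_const, sq_abs, hsq] at hcs
  exact (le_abs_self _).trans (Real.abs_le_sqrt hcs)

theorem expect_maxAbsWalk_le : 𝔼 ω : Fin n → Bool, (maxAbsWalk ω : ℝ) ≤ 2 * √n := by
  have hsum : ∑ ω : Fin n → Bool, (maxAbsWalk ω : ℝ)
      ≤ 2 * ∑ ω : Fin n → Bool, |(walk ω n : ℝ)| := mod_cast sum_maxAbsWalk_le
  calc 𝔼 ω : Fin n → Bool, (maxAbsWalk ω : ℝ)
        ≤ 2 * 𝔼 ω : Fin n → Bool, |(walk ω n : ℝ)| := by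
        rw [expect_eq_sum_div_two_pow, expect_eq_sum_div_two_pow, ← mul_div_assoc]
        gcongr
    _ ≤ 2 * √n := by gcongr; exact expect_abs_walk_le

theorem sum_sign_mul_le (ω : Fin n → Bool) {M : ℝ} {v : Fin n → ℝ}
    (hv : ∀ i, v i ∈ Set.Icc (-1 : ℝ) 1)
    (hvar : ∑ i : Fin (n - 1),
      |v ⟨i.1 + 1, Nat.add_lt_of_lt_sub i.isLt⟩ - v ⟨i.1, Nat.lt_of_lt_pred i.isLt⟩| ≤ M) :
    ∑ i, (if ω i then (1 : ℝ) else -1) * v i ≤ |(walk ω n : ℝ)| + M * maxAbsWalk ω := by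
  let w : ℕ → ℝ := fun j => if h : j < n then v ⟨j, h⟩ else 0
  have hsum : ∑ i, (if ω i then (1 : ℝ) else -1) * v i = ∑ j ∈ range n, w j * step ω j := by
    rw [← Fin.sum_univ_eq_sum_range (fun j => w j * step ω j)]
    refine sum_congr rfl fun i _ => ?_
    simp [w, step, mul_comm]
  have hw : |w (n - 1)| ≤ 1 := by
    simp only [w]
    split_ifs
    exacts [abs_le.2 (hv _), by simp]
  have hwvar : ∑ j ∈ range (n - 1), |w (j + 1) - w j| ≤ M := by
    rw [← Fin.sum_univ_eq_sum_range (fun j => |w (j + 1) - w j|)]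
    convert hvar using 4 with i
    all_goals
      have := i.isLt
      simp [w, show (i : ℕ) < n by omega, show (i : ℕ) + 1 < n by omega]
  have hpartial : ∀ k ≤ n, |∑ j ∈ range k, (step ω j : ℝ)| ≤ maxAbsWalk ω := fun k hk => by
    exact_mod_cast abs_walk_le_maxAbsWalk ω hk
  rw [hsum]
  exact (le_abs_self _).trans
    (by simpa [walk] using abs_sum_range_mul_le_of_sum_abs_sub_le hw hwvar hpartial)

end SignWalk

/-- Rademacher complexity bound for vectors of bounded discrete total variation:
for i.i.d. Rademacher signs `ε₁,…,εₙ` (realized as `±1`-valued coordinates of a uniform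
point of `Bool^n`),
`E[sup_{f ∈ [−1,1]ⁿ, Σᵢ|f_{i+1}−f_i| ≤ M} (1/n)·Σᵢ εᵢ fᵢ] ≤ (2M+1)/√n`. -/
theorem rademacher_bv_bound (n : ℕ) (M : ℝ) (hM : 0 < M) :
    (∫ ω : Fin n → Bool,
        (⨆ v : {v : Fin n → ℝ // (∀ i, v i ∈ Icc (-1:ℝ) 1) ∧
            (∑ i : Fin (n-1),
              |v ⟨i.1 + 1, by have := i.isLt; omega⟩ - v ⟨i.1, by have := i.isLt; omega⟩|)
              ≤ M},
          (n : ℝ)⁻¹ * ∑ i, (if ω i then (1:ℝ) else -1) * v.1 i)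
        ∂((PMF.uniformOfFintype (Fin n → Bool)).toMeasure))
      ≤ (2 * M + 1) / Real.sqrt n := by
  rw [PMF.integral_uniformOfFintype]
  open Finset SignWalk in
  calc _ ≤ 𝔼 ω : Fin n → Bool, (n : ℝ)⁻¹ * (|(walk ω n : ℝ)| + M * maxAbsWalk ω) :=
        expect_le_expect fun ω _ => Real.iSup_le
          (fun v => mul_le_mul_of_nonneg_left (sum_sign_mul_le ω v.2.1 v.2.2) (by positivity))
          (by have : (0 : ℝ) ≤ maxAbsWalk ω := mod_cast maxAbsWalk_nonneg ω; positivity)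
    _ = (n : ℝ)⁻¹ * (𝔼 ω : Fin n → Bool, |(walk ω n : ℝ)|
          + M * 𝔼 ω : Fin n → Bool, (maxAbsWalk ω : ℝ)) := by
        rw [← mul_expect, expect_add_distrib, ← mul_expect]
    _ ≤ (n : ℝ)⁻¹ * (√n + M * (2 * √n)) := by
        gcongr
        exacts [expect_abs_walk_le, expect_maxAbsWalk_le]
    _ = (2 * M + 1) / √n := by
        rw [show (n : ℝ)⁻¹ * (√n + M * (2 * √n)) = (2 * M + 1) * (√n / n) by ring,
          Real.sqrt_div_self', mul_one_div]
end

section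
/- Let (x₁,y₁),…,(xₙ,yₙ) be data with x₁ ≤ … ≤ xₙ and y_i ∈ ℝ, and let μ̂ ∈ ℝⁿ be the isotonic regression fit, i.e., the minimizer of Σ_{i=1}^n (y_i − v_i)² over all vectors v ∈ ℝⁿ with v₁ ≤ v₂ ≤ … ≤ vₙ. Then for any set A ⊆ ℝ: (1/n)·Σ_{i=1}^n μ̂_i·1{μ̂_i ∈ A} = (1/n)·Σ_{i=1}^n y_i·1{μ̂_i ∈ A}. -/
/-!
Perturbing the fit along any function of its own values, `μ̂ + ε · g ∘ μ̂`, keeps it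
non-decreasing for all small `|ε|`: indices with equal fitted values move together, and the
strict gaps between distinct fitted values are finitely many and positive. So `ε = 0` is a
local minimum of the squared error along this line, and Fermat's rule makes the residual
`y − μ̂` orthogonal to `g ∘ μ̂`. Taking `g = 1_A` gives the theorem.
-/

open Filter Topology

lemma Monotone.eventually_monotone_add_mul_comp {ι : Type*} [Preorder ι] [Finite ι]
    {μ : ι → ℝ} (hμ : Monotone μ) (g : ℝ → ℝ) :
    ∀ᶠ ε in 𝓝 (0 : ℝ), Monotone fun i => μ i + ε * g (μ i) := by
  simp only [Monotone, eventually_all]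
  intro i j hij
  rcases (hμ hij).eq_or_lt with heq | hlt
  · exact Eventually.of_forall fun ε => by rw [heq]
  · have hcont : Continuous fun ε : ℝ => μ i + ε * g (μ i) - (μ j + ε * g (μ j)) := by
      fun_prop
    have hneg : μ i + 0 * g (μ i) - (μ j + 0 * g (μ j)) < 0 := by simpa using hlt
    filter_upwards [hcont.tendsto 0 |>.eventually (eventually_lt_nhds hneg)] with ε hε
    linarith

lemma isLocalMin_sum_sq_sub_add_mul {ι : Type*} [Fintype ι] {y μ w : ι → ℝ}
    (hmin : IsLocalMin (fun ε : ℝ => ∑ i, (y i - (μ i + ε * w i)) ^ 2) 0) :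
    ∑ i, (y i - μ i) * w i = 0 := by
  have hderiv : HasDerivAt (fun ε : ℝ => ∑ i, (y i - (μ i + ε * w i)) ^ 2)
      (∑ i, -(2 * (y i - μ i) * w i)) 0 := by
    refine HasDerivAt.fun_sum fun i _ => ?_
    simpa using
      ((((hasDerivAt_id (0 : ℝ)).mul_const (w i)).const_add (μ i)).const_sub (y i)).fun_pow 2
  have := hmin.hasDerivAt_eq_zero hderiv
  simp only [Finset.sum_neg_distrib, neg_eq_zero, mul_assoc, ← Finset.mul_sum] at this
  simpa using this

lemma sum_sub_mul_comp_eq_zero_of_isotonic_fit {ι : Type*} [Fintype ι] [Preorder ι]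
    {y μ : ι → ℝ} (hμ : Monotone μ)
    (hmin : ∀ v : ι → ℝ, Monotone v → ∑ i, (y i - μ i) ^ 2 ≤ ∑ i, (y i - v i) ^ 2)
    (g : ℝ → ℝ) :
    ∑ i, (y i - μ i) * g (μ i) = 0 :=
  isLocalMin_sum_sq_sub_add_mul <|
    (hμ.eventually_monotone_add_mul_comp g).mono fun _ hε => by simpa using hmin _ hε

/-- Isotonic regression is a piecewise empirical mean: if `μ̂` is the isotonic regression
fit of `y₁,…,yₙ` (the minimizer of `Σᵢ (yᵢ − vᵢ)²` over non-decreasing vectors `v`), then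
for any set `A ⊆ ℝ`,
`(1/n)·Σᵢ μ̂ᵢ·1{μ̂ᵢ ∈ A} = (1/n)·Σᵢ yᵢ·1{μ̂ᵢ ∈ A}`. -/
theorem isotonic_piecewise_mean (n : ℕ) (y μhat : Fin n → ℝ)
    (hmono : Monotone μhat)
    (hmin : ∀ v : Fin n → ℝ, Monotone v →
      (∑ i, (y i - μhat i)^2) ≤ ∑ i, (y i - v i)^2)
    (A : Set ℝ) :
    (n : ℝ)⁻¹ * ∑ i, μhat i * A.indicator (1 : ℝ → ℝ) (μhat i)
      = (n : ℝ)⁻¹ * ∑ i, y i * A.indicator (1 : ℝ → ℝ) (μhat i) := by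
  have h := sum_sub_mul_comp_eq_zero_of_isotonic_fit hmono hmin (A.indicator 1)
  simp only [sub_mul, Finset.sum_sub_distrib, sub_eq_zero] at h
  rw [h]
end
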